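/- arXiv:2306.01264 — 12 statements merged into one kernel-verified Lean document; each statement's English description precedes it below -/
import Mathlib

section
/- For all p ∈ (0,1] and t ≥ 0, t ≤ (2/√p)·log(e + 1/p)·(p(1+√p)^t + 1). -/
open Real

/-!
Write `s = √p` and `L = log (e + 1/p)`, so that `L ≥ 1` and `L ≥ log (1/p)`. By `log x ≤ x - 1`,
`t log (1 + s) = log (p (1 + s)^t) + log (1/p) ≤ p (1 + s)^t - 1 + L ≤ L (p (1 + s)^t + 1)`,
and `log (1 + s) ≥ s / 2` because `s ≤ 1`.
-/

lemma half_le_log_one_add {x : ℝ} (hx0 : 0 ≤ x) (hx1 : x ≤ 1) : x / 2 ≤ log (1 + x) := by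
  calc x / 2 ≤ x / (1 + x) := div_le_div_of_nonneg_left hx0 (by linarith) (by linarith)
    _ = 1 - (1 + x)⁻¹ := by field_simp; ring
    _ ≤ log (1 + x) := one_sub_inv_le_log_of_pos (by linarith)

lemma mul_log_le_mul_mul_rpow_add_one {p b t L : ℝ} (hp : 0 < p) (hb : 0 < b)
    (hL : 1 ≤ L) (hLp : log p⁻¹ ≤ L) : t * log b ≤ L * (p * b ^ t + 1) := by
  have hP : 0 < p * b ^ t := by positivity
  calc t * log b = log (p * b ^ t) + log p⁻¹ := by
        rw [log_mul hp.ne' (rpow_pos_of_pos hb t).ne', log_rpow hb, log_inv]; ring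
    _ ≤ (p * b ^ t - 1) + L := add_le_add (log_le_sub_one_of_pos hP) hLp
    _ ≤ L * (p * b ^ t + 1) := by nlinarith

theorem t_le_log_bound (p t : ℝ) (hp0 : 0 < p) (hp1 : p ≤ 1) (ht : 0 ≤ t) :
    t ≤ 2 / Real.sqrt p * Real.log (Real.exp 1 + 1 / p) *
      (p * (1 + Real.sqrt p) ^ t + 1) := by
  set L := log (exp 1 + 1 / p)
  have hs : 0 < √p := sqrt_pos.mpr hp0
  have hL : 1 ≤ L := by
    rw [← log_exp 1]
    exact log_le_log (exp_pos 1) (by simp only [one_div, le_add_iff_nonneg_right]; positivity)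
  have hLp : log p⁻¹ ≤ L :=
    log_le_log (inv_pos.mpr hp0) (by rw [one_div]; linarith [exp_pos 1])
  have key : t * (√p / 2) ≤ L * (p * (1 + √p) ^ t + 1) :=
    (mul_le_mul_of_nonneg_left (half_le_log_one_add hs.le (sqrt_le_one.mpr hp1)) ht).trans
      (mul_log_le_mul_mul_rpow_add_one hp0 (by positivity) hL hLp)
  rw [div_mul_eq_mul_div, div_mul_eq_mul_div, le_div_iff₀ hs]
  linarith
end

section
/- Let 0 < ημ < 1 and define B_0 = 0, B_{t+1} = (2B_t + 1 + √(4B_t + 4ημB_t² + 1)) / (2(1−ημ)). Then for all t ≥ 1, B_t/(1−√(ημ)) ≤ B_{t+1} ≤ 3B_t/(1−ημ), and consequently B_t ≥ (1+√(ημ))^{t−1}. -/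
/-!
Write `a = ημ` and `s = √a`, so that `1 - a = (1 - s)(1 + s)`. One step of the recursion is
`b ↦ (2b + 1 + r) / (2(1 - a))` with `r = √(4b + 4ab² + 1)`, and the two ratio bounds reduce to
`2sb ≤ r ≤ 4b - 1`, the first since `r² ≥ 4ab²`, the second (for `b ≥ 1`) since `r² ≤ (4b - 1)²`.
The lower bound gives `B_{t+1} ≥ B_t/(1 - s) ≥ (1 + s) B_t`, and `B_1 = 1/(1 - a) ≥ 1` starts the
geometric growth.
-/

open Real

theorem one_sub_eq_one_sub_sqrt_mul_one_add_sqrt {a : ℝ} (ha : 0 ≤ a) :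
    1 - a = (1 - √a) * (1 + √a) := by
  linear_combination sq_sqrt ha

noncomputable def nagWeightStep (a b : ℝ) : ℝ :=
  (2 * b + 1 + √(4 * b + 4 * a * b ^ 2 + 1)) / (2 * (1 - a))

namespace nagWeightStep

variable {a b : ℝ}

theorem two_mul_sqrt_mul_le_sqrt (ha : 0 ≤ a) (hb : 0 ≤ b) :
    2 * √a * b ≤ √(4 * b + 4 * a * b ^ 2 + 1) := by
  rw [Real.le_sqrt (by positivity) (by positivity), mul_pow, mul_pow, sq_sqrt ha]
  nlinarith

theorem sqrt_le_four_mul_sub_one (ha : a ≤ 1) (hb : 1 ≤ b) :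
    √(4 * b + 4 * a * b ^ 2 + 1) ≤ 4 * b - 1 := by
  rw [Real.sqrt_le_left (by linarith)]
  nlinarith

theorem zero_eq : nagWeightStep a 0 = 1 / (1 - a) := by
  norm_num [nagWeightStep]
  field_simp

theorem div_one_sub_sqrt_le (ha : 0 ≤ a) (ha1 : a < 1) (hb : 0 ≤ b) :
    b / (1 - √a) ≤ nagWeightStep a b := by
  have hs1 : √a < 1 := (sqrt_lt' one_pos).mpr (by rwa [one_pow])
  have := two_mul_sqrt_mul_le_sqrt ha hb
  rw [nagWeightStep, div_le_div_iff₀ (by linarith) (by linarith),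
    one_sub_eq_one_sub_sqrt_mul_one_add_sqrt ha]
  nlinarith

theorem le_three_mul_div (ha1 : a < 1) (hb : 1 ≤ b) :
    nagWeightStep a b ≤ 3 * b / (1 - a) := by
  have := sqrt_le_four_mul_sub_one ha1.le hb
  rw [nagWeightStep, div_le_div_iff₀ (by linarith) (by linarith)]
  nlinarith

theorem one_add_sqrt_mul_le (ha : 0 ≤ a) (ha1 : a < 1) (hb : 0 ≤ b) :
    (1 + √a) * b ≤ nagWeightStep a b := by
  refine le_trans ?_ (div_one_sub_sqrt_le ha ha1 hb)
  have hs1 : √a < 1 := (sqrt_lt' one_pos).mpr (by rwa [one_pow])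
  rw [le_div_iff₀ (by linarith), mul_right_comm, mul_comm _ (1 - √a),
    ← one_sub_eq_one_sub_sqrt_mul_one_add_sqrt ha]
  nlinarith

end nagWeightStep

theorem one_add_sqrt_pow_le_of_nagWeightStep {a : ℝ} (ha : 0 ≤ a) (ha1 : a < 1)
    {B : ℕ → ℝ} (hB0 : B 0 = 0) (hB : ∀ t, B (t + 1) = nagWeightStep a (B t)) (n : ℕ) :
    (1 + √a) ^ n ≤ B (n + 1) := by
  induction n with
  | zero =>
    rw [pow_zero, hB, hB0, nagWeightStep.zero_eq, le_div_iff₀ (by linarith)]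
    linarith
  | succ n ih =>
    have hBn : 0 ≤ B (n + 1) := (pow_nonneg (by positivity) n).trans ih
    calc (1 + √a) ^ (n + 1) = (1 + √a) * (1 + √a) ^ n := pow_succ' _ _
      _ ≤ (1 + √a) * B (n + 1) := by gcongr
      _ ≤ nagWeightStep a (B (n + 1)) := nagWeightStep.one_add_sqrt_mul_le ha ha1 hBn
      _ = B (n + 2) := (hB _).symm

theorem nag_sc_weight_growth (η μ : ℝ) (hη : 0 < η) (hμ : 0 < μ) (hημ : η * μ < 1)
    (B : ℕ → ℝ) (hB0 : B 0 = 0)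
    (hBrec : ∀ t : ℕ, B (t + 1) =
      (2 * B t + 1 + Real.sqrt (4 * B t + 4 * (η * μ) * B t ^ 2 + 1)) / (2 * (1 - η * μ))) :
    ∀ t : ℕ, 1 ≤ t →
      (B t / (1 - Real.sqrt (η * μ)) ≤ B (t + 1) ∧
        B (t + 1) ≤ 3 * B t / (1 - η * μ)) ∧
      (1 + Real.sqrt (η * μ)) ^ (t - 1) ≤ B t := by
  have ha : 0 ≤ η * μ := (mul_pos hη hμ).le
  have hB : ∀ t, B (t + 1) = nagWeightStep (η * μ) (B t) := hBrec
  intro t ht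
  obtain ⟨n, rfl⟩ := Nat.exists_eq_add_of_le' ht
  have hgrowth := one_add_sqrt_pow_le_of_nagWeightStep ha hημ hB0 hB n
  have hB1 : 1 ≤ B (n + 1) :=
    (one_le_pow₀ (le_add_of_nonneg_right (sqrt_nonneg _))).trans hgrowth
  rw [hB (n + 1), Nat.add_sub_cancel]
  exact ⟨⟨nagWeightStep.div_one_sub_sqrt_le ha hημ (by linarith),
    nagWeightStep.le_three_mul_div hημ hB1⟩, hgrowth⟩
end

section
/- Let 0 < ημ < 1 and define B_0 = 0, B_{t+1} = (2B_t + 1 + √(4B_t + 4ημB_t² + 1)) / (2(1−ημ)). Then for all t ≥ 1, ∑_{s=0}^{t} √(B_s) ≤ (1−ημ) B_{t+1} ≤ 3 B_t. -/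
/-!
Write `c = ημ` and `D(b) = 4b + 4cb² + 1`, so that `(1 - c) B_{t+1} = B_t + (1 + √D(B_t)) / 2`.
Since `√D(b) ≥ max(1, 2√b)`, each step gives `(1 - c) B_{t+1} ≥ B_t + 1` (hence `B_t ≥ t`) and
`(1 - c) B_{t+1} ≥ B_t + √B_t`, which telescopes to the lower bound because `B_t ≥ (1 - c) B_t`.
For `b ≥ 1 > c` one has `D(b) ≤ (4b - 1)²`, which gives the upper bound `3 B_t`.
-/

open Finset

namespace NagWeight

/-- One step `B_t ↦ B_{t+1}` of the weight recursion, with `c = ημ`. -/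
noncomputable def step (c b : ℝ) : ℝ :=
  (2 * b + 1 + √(4 * b + 4 * c * b ^ 2 + 1)) / (2 * (1 - c))

section Step

variable {c b : ℝ}

lemma two_mul_sqrt_le_sqrt_disc (hc : 0 ≤ c) (hb : 0 ≤ b) :
    2 * √b ≤ √(4 * b + 4 * c * b ^ 2 + 1) := by
  rw [Real.le_sqrt (by positivity) (by positivity), mul_pow, Real.sq_sqrt hb]
  nlinarith [mul_nonneg hc (sq_nonneg b)]

lemma one_le_sqrt_disc (hc : 0 ≤ c) (hb : 0 ≤ b) : 1 ≤ √(4 * b + 4 * c * b ^ 2 + 1) :=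
  Real.one_le_sqrt.mpr (by nlinarith [mul_nonneg hc (sq_nonneg b)])

lemma sqrt_disc_le (hc : c < 1) (hb : 1 ≤ b) : √(4 * b + 4 * c * b ^ 2 + 1) ≤ 4 * b - 1 := by
  rw [Real.sqrt_le_left (by linarith)]
  nlinarith [mul_le_mul_of_nonneg_right hc.le (sq_nonneg b)]

lemma one_sub_mul_step (hc : c < 1) :
    (1 - c) * step c b = b + (1 + √(4 * b + 4 * c * b ^ 2 + 1)) / 2 := by
  have : 1 - c ≠ 0 := by linarith
  rw [step]
  field_simp
  ring

lemma add_one_le_one_sub_mul_step (hc₀ : 0 ≤ c) (hc : c < 1) (hb : 0 ≤ b) :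
    b + 1 ≤ (1 - c) * step c b := by
  rw [one_sub_mul_step hc]
  linarith [one_le_sqrt_disc hc₀ hb]

lemma add_sqrt_le_one_sub_mul_step (hc₀ : 0 ≤ c) (hc : c < 1) (hb : 0 ≤ b) :
    b + √b ≤ (1 - c) * step c b := by
  rw [one_sub_mul_step hc]
  linarith [two_mul_sqrt_le_sqrt_disc hc₀ hb]

lemma one_sub_mul_step_le (hc : c < 1) (hb : 1 ≤ b) : (1 - c) * step c b ≤ 3 * b := by
  rw [one_sub_mul_step hc]
  linarith [sqrt_disc_le hc hb]

end Step

variable {c : ℝ} {B : ℕ → ℝ}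

lemma natCast_le (hc₀ : 0 ≤ c) (hc : c < 1) (hB0 : B 0 = 0)
    (hrec : ∀ t, B (t + 1) = step c (B t)) (t : ℕ) : (t : ℝ) ≤ B t := by
  induction t with
  | zero => simp [hB0]
  | succ t ih =>
    have hstep : B t + 1 ≤ (1 - c) * B (t + 1) :=
      hrec t ▸ add_one_le_one_sub_mul_step hc₀ hc ((Nat.cast_nonneg t).trans ih)
    have hpos : 0 < B (t + 1) :=
      pos_of_mul_pos_right (a := 1 - c) (by linarith [(Nat.cast_nonneg t).trans ih]) (by linarith)
    push_cast
    nlinarith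

lemma sum_sqrt_le (hc₀ : 0 ≤ c) (hc : c < 1) (hB0 : B 0 = 0)
    (hrec : ∀ t, B (t + 1) = step c (B t)) (t : ℕ) :
    ∑ s ∈ range (t + 1), √(B s) ≤ (1 - c) * B (t + 1) := by
  have hnonneg (s : ℕ) : 0 ≤ B s := (Nat.cast_nonneg s).trans (natCast_le hc₀ hc hB0 hrec s)
  induction t with
  | zero => simpa [hB0] using mul_nonneg (by linarith) (hnonneg 1)
  | succ t ih =>
    have hstep : B (t + 1) + √(B (t + 1)) ≤ (1 - c) * B (t + 1 + 1) :=
      hrec (t + 1) ▸ add_sqrt_le_one_sub_mul_step hc₀ hc (hnonneg (t + 1))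
    rw [sum_range_succ]
    nlinarith [mul_nonneg hc₀ (hnonneg (t + 1))]

lemma one_sub_mul_le (hc₀ : 0 ≤ c) (hc : c < 1) (hB0 : B 0 = 0)
    (hrec : ∀ t, B (t + 1) = step c (B t)) {t : ℕ} (ht : 1 ≤ t) :
    (1 - c) * B (t + 1) ≤ 3 * B t :=
  hrec t ▸ one_sub_mul_step_le hc (le_trans (by exact_mod_cast ht) (natCast_le hc₀ hc hB0 hrec t))

end NagWeight

theorem nag_sc_weight_sum (η μ : ℝ) (hη : 0 < η) (hμ : 0 < μ) (hημ : η * μ < 1)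
    (B : ℕ → ℝ) (hB0 : B 0 = 0)
    (hBrec : ∀ t : ℕ, B (t + 1) =
      (2 * B t + 1 + Real.sqrt (4 * B t + 4 * (η * μ) * B t ^ 2 + 1)) / (2 * (1 - η * μ))) :
    ∀ t : ℕ, 1 ≤ t →
      (∑ s ∈ Finset.range (t + 1), Real.sqrt (B s)) ≤ (1 - η * μ) * B (t + 1) ∧
      (1 - η * μ) * B (t + 1) ≤ 3 * B t := by
  have hc₀ : 0 ≤ η * μ := (mul_pos hη hμ).le
  exact fun t ht => ⟨NagWeight.sum_sqrt_le hc₀ hημ hB0 hBrec t,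
    NagWeight.one_sub_mul_le hc₀ hημ hB0 hBrec ht⟩
end

section
/- For the function f(x) = 1/x on (0, ∞), for any ρ < 1.5 and any constants L_0, L_ρ ≥ 0 there exists x > 0 with |f''(x)| > L_0 + L_ρ |f'(x)|^ρ. In particular, f is not (ρ, L_0, L_ρ)-smooth for any ρ < 1.5. -/
/-!
At `x = 1 / t` we have `|f'(x)| = t ^ 2` and `|f''(x)| = 2 t ^ 3`, so the smoothness bound would
require `2 t ^ 3 ≤ L₀ + L_ρ t ^ (2ρ)` for all `t > 0`. Since `2ρ < 3`, the right-hand side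
grows strictly slower than `t ^ 3`, which is impossible for large `t`.
-/

open Real Filter

theorem deriv_deriv_one_div {𝕜 : Type*} [NontriviallyNormedField 𝕜] (x : 𝕜) :
    deriv (deriv fun y : 𝕜 => 1 / y) x = 2 / x ^ 3 := by
  have h := iter_deriv_inv (𝕜 := 𝕜) 2 x
  simp only [Function.iterate_succ, Function.iterate_zero, Function.comp_apply,
    Function.id_comp] at h
  simp only [one_div]
  rw [show (fun y : 𝕜 => y⁻¹) = Inv.inv from rfl, h]
  norm_num [zpow_neg, div_eq_mul_inv]

theorem eventually_add_mul_rpow_lt_rpow {a b : ℝ} (hab : a < b) (hb : 0 < b) (c d : ℝ) :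
    ∀ᶠ t in atTop, c + d * t ^ a < t ^ b := by
  have hlim : Tendsto (fun t : ℝ => c * t ^ (-b) + d * t ^ (-(b - a))) atTop (nhds 0) := by
    simpa using ((tendsto_rpow_neg_atTop hb).const_mul c).add
      ((tendsto_rpow_neg_atTop (sub_pos.2 hab)).const_mul d)
  filter_upwards [hlim.eventually (gt_mem_nhds one_pos), eventually_gt_atTop 0] with t ht ht0
  calc c + d * t ^ a = t ^ b * (c * t ^ (-b) + d * t ^ (-(b - a))) := by
        rw [neg_sub, rpow_neg ht0.le, rpow_sub ht0]
        field_simp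
    _ < t ^ b * 1 := by gcongr
    _ = t ^ b := mul_one _

theorem inv_not_rho_smooth_general (ρ L0 Lρ : ℝ) (hρ : ρ < 1.5) :
    let f : ℝ → ℝ := fun x => 1 / x
    ∃ x : ℝ, 0 < x ∧ |deriv (deriv f) x| > L0 + Lρ * |deriv f x| ^ ρ := by
  intro f
  obtain ⟨t, hbound, ht⟩ := ((eventually_add_mul_rpow_lt_rpow (a := 2 * ρ) (b := 3)
    (by norm_num at hρ ⊢; linarith) three_pos L0 Lρ).and (eventually_gt_atTop 0)).exists
  refine ⟨t⁻¹, inv_pos.2 ht, ?_⟩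
  have hf' : |deriv f t⁻¹| = t ^ 2 := by simp [f, one_div, deriv_inv]
  have hf'' : |deriv (deriv f) t⁻¹| = 2 * t ^ (3 : ℝ) := by
    rw [deriv_deriv_one_div]
    simp [abs_of_pos ht]
  rw [hf', hf'', ← rpow_natCast_mul ht.le]
  push_cast
  linarith [rpow_pos_of_pos ht 3]

theorem inv_not_rho_smooth (ρ L0 Lρ : ℝ) (hρ : ρ < 1.5) (hL0 : 0 ≤ L0) (hLρ : 0 ≤ Lρ) :
    let f : ℝ → ℝ := fun x => 1 / x
    ∃ x : ℝ, 0 < x ∧ |deriv (deriv f) x| > L0 + Lρ * |deriv f x| ^ ρ :=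
  inv_not_rho_smooth_general ρ L0 Lρ hρ
end

section
/- Let f: 𝒳 → ℝ be differentiable on an open set 𝒳 ⊆ ℝ^d, and suppose f is (r,ℓ)-smooth: ℓ is non-decreasing, r is non-increasing, for every x ∈ 𝒳 the closed ball B(x, r(‖∇f(x)‖)) ⊆ 𝒳, and ∇f is ℓ(‖∇f(x)‖)-Lipschitz on this ball. Then for any x ∈ 𝒳 with ‖∇f(x)‖ ≤ G, setting L = ℓ(G): B(x, r(G)) ⊆ 𝒳, and for all x_1, x_2 ∈ B(x, r(G)), f(x_1) ≤ f(x_2) + ⟨∇f(x_2), x_1 − x_2⟩ + (L/2)‖x_1 − x_2‖². -/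
/-!
Along the segment from `x₂` to `x₁` the slope of `f` exceeds its initial value by at most
`L t ‖x₁ - x₂‖²` at time `t`, since the gradient is `L`-Lipschitz there; integrating this
comparison gives the quadratic upper bound. The ball `B(x, r(G))` lies inside `B(x, r(‖∇f(x)‖))`
because `r` is non-increasing, and on the larger ball `∇f` is `ℓ(‖∇f(x)‖)`-Lipschitz, hence
`ℓ(G)`-Lipschitz because `ℓ` is non-decreasing.
-/

open RealInnerProductSpace Set

theorem image_one_le_of_hasDerivAt_le_add_mul {φ φ' : ℝ → ℝ} {K : ℝ}
    (hφ : ∀ t ∈ Icc (0 : ℝ) 1, HasDerivAt φ (φ' t) t)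
    (hφ' : ∀ t ∈ Icc (0 : ℝ) 1, φ' t ≤ φ' 0 + K * t) :
    φ 1 ≤ φ 0 + φ' 0 + K / 2 := by
  have hB : ∀ t : ℝ, HasDerivAt (fun s => φ 0 + φ' 0 * s + K / 2 * s ^ 2) (φ' 0 + K * t) t :=
    fun t => (((hasDerivAt_id' t).const_mul (φ' 0)).const_add (φ 0)).add
      ((hasDerivAt_pow 2 t).const_mul (K / 2)) |>.congr_deriv (by push_cast; ring)
  have := image_le_of_deriv_right_le_deriv_boundary (a := 0) (b := 1)
    (fun t ht => (hφ t ht).continuousAt.continuousWithinAt)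
    (fun t ht => (hφ t (Ico_subset_Icc_self ht)).hasDerivWithinAt) (by simp)
    (fun t _ => (hB t).continuousAt.continuousWithinAt) (fun t _ => (hB t).hasDerivWithinAt)
    (fun t ht => hφ' t (Ico_subset_Icc_self ht)) (right_mem_Icc.2 zero_le_one)
  simpa using this

theorem Convex.image_le_add_fderiv_add_mul_sq {E : Type*} [NormedAddCommGroup E]
    [NormedSpace ℝ E] {s : Set E} (hs : Convex ℝ s) {f : E → ℝ} {f' : E → E →L[ℝ] ℝ} {L : ℝ}
    (hf : ∀ x ∈ s, HasFDerivAt f (f' x) x)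
    (hf' : ∀ x ∈ s, ∀ y ∈ s, ‖f' x - f' y‖ ≤ L * ‖x - y‖) {a b : E} (ha : a ∈ s)
    (hb : b ∈ s) :
    f a ≤ f b + f' b (a - b) + L / 2 * ‖a - b‖ ^ 2 := by
  set c : ℝ → E := fun t => b + t • (a - b)
  have hc : ∀ t ∈ Icc (0 : ℝ) 1, c t ∈ s := fun t ht => hs.add_smul_sub_mem hb ha ht
  have hderiv : ∀ t ∈ Icc (0 : ℝ) 1, HasDerivAt (f ∘ c) (f' (c t) (a - b)) t := fun t ht =>
    (hf _ (hc t ht)).comp_hasDerivAt t <| by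
      simpa only [one_smul] using ((hasDerivAt_id' t).smul_const (a - b)).const_add b
  have hslope : ∀ t ∈ Icc (0 : ℝ) 1,
      f' (c t) (a - b) ≤ f' (c 0) (a - b) + L * ‖a - b‖ ^ 2 * t := by
    intro t ht
    have hct : ‖c t - b‖ = t * ‖a - b‖ := by
      simp [c, norm_smul, abs_of_nonneg ht.1]
    calc f' (c t) (a - b) = f' b (a - b) + (f' (c t) - f' b) (a - b) := by simp
      _ ≤ f' b (a - b) + ‖f' (c t) - f' b‖ * ‖a - b‖ := by
          gcongr; exact (le_abs_self _).trans ((f' (c t) - f' b).le_opNorm _)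
      _ ≤ f' b (a - b) + L * (t * ‖a - b‖) * ‖a - b‖ := by
          gcongr; exact hct ▸ hf' _ (hc t ht) b hb
      _ = f' (c 0) (a - b) + L * ‖a - b‖ ^ 2 * t := by simp only [c, zero_smul, add_zero]; ring
  have := image_one_le_of_hasDerivAt_le_add_mul hderiv hslope
  simp only [Function.comp, c, zero_smul, one_smul, add_zero, add_sub_cancel] at this
  linarith

theorem Convex.image_le_add_inner_add_mul_sq {E : Type*} [NormedAddCommGroup E]
    [InnerProductSpace ℝ E] [CompleteSpace E] {s : Set E} (hs : Convex ℝ s) {f : E → ℝ}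
    {g : E → E} {L : ℝ} (hf : ∀ x ∈ s, HasGradientAt f (g x) x)
    (hg : ∀ x ∈ s, ∀ y ∈ s, ‖g x - g y‖ ≤ L * ‖x - y‖) {a b : E} (ha : a ∈ s) (hb : b ∈ s) :
    f a ≤ f b + ⟪g b, a - b⟫ + L / 2 * ‖a - b‖ ^ 2 :=
  hs.image_le_add_fderiv_add_mul_sq (fun x hx => (hf x hx).hasFDerivAt)
    (fun x hx y hy => by
      simpa only [← map_sub, LinearIsometryEquiv.norm_map] using hg x hx y hy) ha hb

theorem descent_lemma_generalized_smooth_general (d : ℕ)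
    (X : Set (EuclideanSpace ℝ (Fin d)))
    (f : EuclideanSpace ℝ (Fin d) → ℝ)
    (g : EuclideanSpace ℝ (Fin d) → EuclideanSpace ℝ (Fin d))
    (hgrad : ∀ x ∈ X, HasGradientAt f (g x) x)
    (ℓ r : ℝ → ℝ) (hℓmono : Monotone ℓ)
    (hranti : Antitone r)
    (hball : ∀ x ∈ X, Metric.closedBall x (r ‖g x‖) ⊆ X)
    (hlip : ∀ x ∈ X, ∀ x₁ ∈ Metric.closedBall x (r ‖g x‖),
      ∀ x₂ ∈ Metric.closedBall x (r ‖g x‖),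
        ‖g x₁ - g x₂‖ ≤ ℓ ‖g x‖ * ‖x₁ - x₂‖)
    (x : EuclideanSpace ℝ (Fin d)) (hx : x ∈ X) (G : ℝ) (hG : ‖g x‖ ≤ G) :
    Metric.closedBall x (r G) ⊆ X ∧
    ∀ x₁ ∈ Metric.closedBall x (r G), ∀ x₂ ∈ Metric.closedBall x (r G),
      f x₁ ≤ f x₂ + ⟪g x₂, x₁ - x₂⟫ + ℓ G / 2 * ‖x₁ - x₂‖ ^ 2 := by
  have hsub : Metric.closedBall x (r G) ⊆ Metric.closedBall x (r ‖g x‖) :=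
    Metric.closedBall_subset_closedBall (hranti hG)
  refine ⟨hsub.trans (hball x hx), fun x₁ hx₁ x₂ hx₂ => ?_⟩
  refine (convex_closedBall x (r G)).image_le_add_inner_add_mul_sq
    (fun y hy => hgrad y (hball x hx (hsub hy))) (fun y hy z hz => ?_) hx₁ hx₂
  calc ‖g y - g z‖ ≤ ℓ ‖g x‖ * ‖y - z‖ := hlip x hx y (hsub hy) z (hsub hz)
    _ ≤ ℓ G * ‖y - z‖ := by gcongr; exact hℓmono hG

theorem descent_lemma_generalized_smooth (d : ℕ)
    (X : Set (EuclideanSpace ℝ (Fin d))) (hX : IsOpen X)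
    (f : EuclideanSpace ℝ (Fin d) → ℝ)
    (g : EuclideanSpace ℝ (Fin d) → EuclideanSpace ℝ (Fin d))
    (hgrad : ∀ x ∈ X, HasGradientAt f (g x) x)
    (ℓ r : ℝ → ℝ) (hℓmono : Monotone ℓ) (hℓpos : ∀ u : ℝ, 0 ≤ u → 0 < ℓ u)
    (hranti : Antitone r) (hrpos : ∀ u : ℝ, 0 ≤ u → 0 < r u)
    (hball : ∀ x ∈ X, Metric.closedBall x (r ‖g x‖) ⊆ X)
    (hlip : ∀ x ∈ X, ∀ x₁ ∈ Metric.closedBall x (r ‖g x‖),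
      ∀ x₂ ∈ Metric.closedBall x (r ‖g x‖),
        ‖g x₁ - g x₂‖ ≤ ℓ ‖g x‖ * ‖x₁ - x₂‖)
    (x : EuclideanSpace ℝ (Fin d)) (hx : x ∈ X) (G : ℝ) (hG : ‖g x‖ ≤ G) :
    Metric.closedBall x (r G) ⊆ X ∧
    ∀ x₁ ∈ Metric.closedBall x (r G), ∀ x₂ ∈ Metric.closedBall x (r G),
      f x₁ ≤ f x₂ + ⟪g x₂, x₁ - x₂⟫ + ℓ G / 2 * ‖x₁ - x₂‖ ^ 2 :=
  descent_lemma_generalized_smooth_general d X f g hgrad ℓ r hℓmono hranti hball hlip x hx G hG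
end

section
/- Let f: 𝒳 → ℝ be differentiable and (r,ℓ)-smooth on open 𝒳 ⊆ ℝ^d with infimum f* > −∞. Then for any x ∈ 𝒳, setting G = ‖∇f(x)‖ and L = ℓ(G): f(x − (1/L)∇f(x)) ≤ f(x) − ‖∇f(x)‖²/(2L) provided r(G) ≥ G/L, and consequently ‖∇f(x)‖² ≤ 2L·(f(x) − f*). -/
/-!
Along the segment from `x` to `y`, the derivative of `t ↦ f (x + t • (y - x))` exceeds
`⟪∇f x, y - x⟫` by at most `L t ‖y - x‖²`, so comparison with a quadratic barrier gives the
descent lemma `f y ≤ f x + ⟪∇f x, y - x⟫ + L/2 ‖y - x‖²`. The gradient step of length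
`‖∇f x‖ / L` stays inside the ball on which `∇f` is `L`-Lipschitz, hence decreases `f` by
`‖∇f x‖² / (2L)`; as `f* ≤ f (x - ∇f x / L)`, the reverse PL inequality follows.
-/

open Set

theorem image_le_of_hasDerivAt_le_affine {φ φ' : ℝ → ℝ} {a b T : ℝ}
    (hφ : ∀ t ∈ Icc 0 T, HasDerivAt φ (φ' t) t) (hle : ∀ t ∈ Ico 0 T, φ' t ≤ a + b * t) :
    ∀ t ∈ Icc 0 T, φ t ≤ φ 0 + a * t + b * t ^ 2 / 2 := by
  have hB : ∀ t, HasDerivAt (fun t => φ 0 + a * t + b * t ^ 2 / 2) (a + b * t) t := fun t => by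
    have := (((hasDerivAt_id' t).const_mul a).const_add (φ 0)).add
      (((hasDerivAt_pow 2 t).const_mul b).div_const 2)
    exact this.congr_deriv (by norm_num; ring)
  exact image_le_of_deriv_right_le_deriv_boundary
    (fun t ht => (hφ t ht).continuousAt.continuousWithinAt)
    (fun t ht => (hφ t (Ico_subset_Icc_self ht)).hasDerivWithinAt) (by simp)
    (fun t _ => (hB t).continuousAt.continuousWithinAt) (fun t _ => (hB t).hasDerivWithinAt) hle

variable {E : Type*} [NormedAddCommGroup E] [InnerProductSpace ℝ E] [CompleteSpace E]

theorem HasGradientAt.hasDerivAt_comp_add_smul {f : E → ℝ} {g x v : E} {t : ℝ}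
    (hf : HasGradientAt f g (x + t • v)) :
    HasDerivAt (fun s : ℝ => f (x + s • v)) (inner ℝ g v) t := by
  have hline : HasDerivAt (fun s : ℝ => x + s • v) v t := by
    simpa using ((hasDerivAt_id t).smul_const v).const_add x
  exact (hf.hasFDerivAt.comp_hasDerivAt t hline).congr_deriv (by simp)

theorem le_add_inner_add_of_lipschitz_gradient_on_segment {f : E → ℝ} {g : E → E} {x y : E} {L : ℝ}
    (hf : ∀ z ∈ segment ℝ x y, HasGradientAt f (g z) z)
    (hg : ∀ z ∈ segment ℝ x y, ‖g z - g x‖ ≤ L * ‖z - x‖) :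
    f y ≤ f x + inner ℝ (g x) (y - x) + L / 2 * ‖y - x‖ ^ 2 := by
  set v := y - x
  have hseg : ∀ t ∈ Icc (0 : ℝ) 1, x + t • v ∈ segment ℝ x y := fun t ht =>
    segment_eq_image' ℝ x y ▸ mem_image_of_mem _ ht
  have hderiv_le : ∀ t ∈ Ico (0 : ℝ) 1,
      inner ℝ (g (x + t • v)) v ≤ inner ℝ (g x) v + L * ‖v‖ ^ 2 * t := by
    intro t ht
    have hz := hseg t (Ico_subset_Icc_self ht)
    have hlip : ‖g (x + t • v) - g x‖ ≤ L * ‖v‖ * t := by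
      simpa [norm_smul, abs_of_nonneg ht.1, mul_comm, mul_left_comm] using hg _ hz
    calc inner ℝ (g (x + t • v)) v
        = inner ℝ (g x) v + inner ℝ (g (x + t • v) - g x) v := by
          rw [inner_sub_left]; ring
      _ ≤ inner ℝ (g x) v + ‖g (x + t • v) - g x‖ * ‖v‖ := by
          gcongr; exact real_inner_le_norm _ _
      _ ≤ inner ℝ (g x) v + L * ‖v‖ * t * ‖v‖ := by gcongr
      _ = inner ℝ (g x) v + L * ‖v‖ ^ 2 * t := by ring
  have := image_le_of_hasDerivAt_le_affine
    (fun t ht => (hf _ (hseg t ht)).hasDerivAt_comp_add_smul) hderiv_le 1 (by simp)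
  simp only [one_smul, zero_smul, add_zero, add_sub_cancel, v] at this
  linarith

theorem image_gradient_step_le {f : E → ℝ} {g : E → E} {x : E} {L : ℝ} (hL : 0 < L)
    (hf : ∀ z ∈ segment ℝ x (x - (1 / L) • g x), HasGradientAt f (g z) z)
    (hg : ∀ z ∈ segment ℝ x (x - (1 / L) • g x), ‖g z - g x‖ ≤ L * ‖z - x‖) :
    f (x - (1 / L) • g x) ≤ f x - ‖g x‖ ^ 2 / (2 * L) := by
  have := le_add_inner_add_of_lipschitz_gradient_on_segment hf hg
  rw [sub_sub_cancel_left, inner_neg_right, inner_smul_right, real_inner_self_eq_norm_sq,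
    norm_neg, norm_smul, Real.norm_of_nonneg (by positivity)] at this
  convert this using 1
  field_simp
  ring

theorem reverse_PL_inequality_general (d : ℕ)
    (X : Set (EuclideanSpace ℝ (Fin d)))
    (f : EuclideanSpace ℝ (Fin d) → ℝ)
    (g : EuclideanSpace ℝ (Fin d) → EuclideanSpace ℝ (Fin d))
    (hgrad : ∀ x ∈ X, HasGradientAt f (g x) x)
    (ℓ r : ℝ → ℝ) (hℓpos : ∀ u : ℝ, 0 ≤ u → 0 < ℓ u)
    (hball : ∀ x ∈ X, Metric.closedBall x (r ‖g x‖) ⊆ X)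
    (hlip : ∀ x ∈ X, ∀ x₁ ∈ Metric.closedBall x (r ‖g x‖),
      ∀ x₂ ∈ Metric.closedBall x (r ‖g x‖),
        ‖g x₁ - g x₂‖ ≤ ℓ ‖g x‖ * ‖x₁ - x₂‖)
    (fstar : ℝ) (hfstar : IsGLB (f '' X) fstar)
    (x : EuclideanSpace ℝ (Fin d)) (hx : x ∈ X)
    (hr : r ‖g x‖ ≥ ‖g x‖ / ℓ ‖g x‖) :
    f (x - (1 / ℓ ‖g x‖) • g x) ≤ f x - ‖g x‖ ^ 2 / (2 * ℓ ‖g x‖) ∧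
    ‖g x‖ ^ 2 ≤ 2 * ℓ ‖g x‖ * (f x - fstar) := by
  have hL : 0 < ℓ ‖g x‖ := hℓpos _ (norm_nonneg _)
  have hx_ball : x ∈ Metric.closedBall x (r ‖g x‖) :=
    Metric.mem_closedBall_self ((div_nonneg (norm_nonneg _) hL.le).trans hr)
  have hstep_ball : x - (1 / ℓ ‖g x‖) • g x ∈ Metric.closedBall x (r ‖g x‖) := by
    rw [Metric.mem_closedBall, dist_eq_norm, sub_sub_cancel_left, norm_neg, norm_smul,
      Real.norm_of_nonneg (by positivity), one_div_mul_eq_div]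
    exact hr
  have hseg := (convex_closedBall x (r ‖g x‖)).segment_subset hx_ball hstep_ball
  have hdescent := image_gradient_step_le hL (fun z hz => hgrad z (hball x hx (hseg hz)))
    (fun z hz => hlip x hx z (hseg hz) x hx_ball)
  refine ⟨hdescent, ?_⟩
  have hfstar_le : fstar ≤ f (x - (1 / ℓ ‖g x‖) • g x) :=
    hfstar.1 (mem_image_of_mem f (hball x hx hstep_ball))
  have : ‖g x‖ ^ 2 / (2 * ℓ ‖g x‖) ≤ f x - fstar := by linarith
  rwa [div_le_iff₀ (by positivity), mul_comm] at this

theorem reverse_PL_inequality (d : ℕ)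
    (X : Set (EuclideanSpace ℝ (Fin d))) (hX : IsOpen X)
    (f : EuclideanSpace ℝ (Fin d) → ℝ)
    (g : EuclideanSpace ℝ (Fin d) → EuclideanSpace ℝ (Fin d))
    (hgrad : ∀ x ∈ X, HasGradientAt f (g x) x)
    (ℓ r : ℝ → ℝ) (hℓmono : Monotone ℓ) (hℓpos : ∀ u : ℝ, 0 ≤ u → 0 < ℓ u)
    (hranti : Antitone r) (hrpos : ∀ u : ℝ, 0 ≤ u → 0 < r u)
    (hball : ∀ x ∈ X, Metric.closedBall x (r ‖g x‖) ⊆ X)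
    (hlip : ∀ x ∈ X, ∀ x₁ ∈ Metric.closedBall x (r ‖g x‖),
      ∀ x₂ ∈ Metric.closedBall x (r ‖g x‖),
        ‖g x₁ - g x₂‖ ≤ ℓ ‖g x‖ * ‖x₁ - x₂‖)
    (fstar : ℝ) (hfstar : IsGLB (f '' X) fstar)
    (x : EuclideanSpace ℝ (Fin d)) (hx : x ∈ X)
    (hr : r ‖g x‖ ≥ ‖g x‖ / ℓ ‖g x‖) :
    f (x - (1 / ℓ ‖g x‖) • g x) ≤ f x - ‖g x‖ ^ 2 / (2 * ℓ ‖g x‖) ∧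
    ‖g x‖ ^ 2 ≤ 2 * ℓ ‖g x‖ * (f x - fstar) :=
  reverse_PL_inequality_general d X f g hgrad ℓ r hℓpos hball hlip fstar hfstar x hx hr
end

section
/- Let f be convex and (r,ℓ)-smooth on an open convex domain 𝒳 ⊆ ℝ^d. Let x ∈ 𝒳 with ‖∇f(x)‖ ≤ G and define x⁺ = x − η∇f(x) with stepsize η ≤ min{2/ℓ(G), r(G)/(2G)}. Then x⁺ ∈ 𝒳 and ‖∇f(x⁺)‖ ≤ ‖∇f(x)‖. -/
/-!
On `B = closedBall x (r ‖g x‖)` the gradient is `L`-Lipschitz with `L = ℓ ‖g x‖ ≤ ℓ G`, and the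
step length `η ‖g x‖ ≤ r G / 2` keeps `x⁺` and the auxiliary points `x⁺ - L⁻¹ δ`, `x + L⁻¹ δ`
(with `δ = g x⁺ - g x`) inside `B`. The first-order convexity inequality combined with the descent
lemma at these points gives co-coercivity, `‖δ‖² ≤ L ⟪δ, x⁺ - x⟫ = -η L ⟪g x, δ⟫`, hence
`‖g x⁺‖² = ‖g x‖² + 2 ⟪g x, δ⟫ + ‖δ‖² ≤ ‖g x‖² + (2 - η L) ⟪g x, δ⟫ ≤ ‖g x‖²`.
-/

open Set Metric
open scoped RealInnerProductSpace

theorem sub_smul_mem_closedBall_self {F : Type*} [SeminormedAddCommGroup F] [NormedSpace ℝ F]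
    {x v : F} {η ρ : ℝ} (hη : 0 ≤ η) (h : η * ‖v‖ ≤ ρ) : x - η • v ∈ closedBall x ρ := by
  rwa [mem_closedBall, dist_eq_norm, sub_sub_cancel_left, norm_neg, norm_smul,
    Real.norm_of_nonneg hη]

theorem norm_add_le_of_norm_sq_le_neg_mul_inner {F : Type*} [NormedAddCommGroup F]
    [InnerProductSpace ℝ F] {u v : F} {c : ℝ} (hc₀ : 0 < c) (hc₂ : c ≤ 2)
    (h : ‖v‖ ^ 2 ≤ -(c * ⟪u, v⟫)) : ‖u + v‖ ≤ ‖u‖ := by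
  have huv : ⟪u, v⟫ ≤ 0 := by nlinarith [sq_nonneg ‖v‖]
  rw [← sq_le_sq₀ (norm_nonneg _) (norm_nonneg _), norm_add_sq_real]
  nlinarith

section

variable {E : Type*} [NormedAddCommGroup E] [InnerProductSpace ℝ E] [CompleteSpace E]
  {f : E → ℝ}

theorem HasGradientAt.hasDerivAt_add_smul {g x v : E} {t : ℝ}
    (h : HasGradientAt f g (x + t • v)) :
    HasDerivAt (fun t : ℝ => f (x + t • v)) ⟪g, v⟫ t := by
  have hline : HasDerivAt (fun t : ℝ => x + t • v) v t := by
    simpa using ((hasDerivAt_id t).smul_const v).const_add x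
  exact h.hasFDerivAt.comp_hasDerivAt t hline

theorem ConvexOn.add_inner_sub_le_of_hasGradientAt {s : Set E} (hf : ConvexOn ℝ s f)
    {x y g : E} (hx : x ∈ s) (hy : y ∈ s) (hg : HasGradientAt f g x) :
    f x + ⟪g, y - x⟫ ≤ f y := by
  have hline : ConvexOn ℝ (Icc 0 1) (fun t : ℝ => f (x + t • (y - x))) := by
    simpa [Function.comp_def, AffineMap.lineMap_apply_module', add_comm] using
      (hf.comp_affineMap (AffineMap.lineMap x y)).subset (hf.1.mapsTo_lineMap hx hy)
        (convex_Icc 0 1)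
  have hderiv := HasGradientAt.hasDerivAt_add_smul (v := y - x) (t := 0) (by simpa using hg)
  have hslope := hline.le_slope_of_hasDerivAt (left_mem_Icc.2 zero_le_one)
    (right_mem_Icc.2 zero_le_one) zero_lt_one hderiv
  simp only [slope_def_field, one_smul, zero_smul, add_zero, add_sub_cancel, sub_zero,
    div_one] at hslope
  linarith

theorem Convex.le_add_inner_add_of_lipschitz_gradient {s : Set E} (hs : Convex ℝ s) {g : E → E}
    (hgrad : ∀ x ∈ s, HasGradientAt f (g x) x) {L : ℝ}
    (hlip : ∀ a ∈ s, ∀ b ∈ s, ‖g a - g b‖ ≤ L * ‖a - b‖) {y z : E} (hy : y ∈ s) (hz : z ∈ s) :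
    f z ≤ f y + ⟪g y, z - y⟫ + L / 2 * ‖z - y‖ ^ 2 := by
  set v := z - y
  have hmem : ∀ t ∈ Icc (0 : ℝ) 1, y + t • v ∈ s := fun t ht => hs.add_smul_sub_mem hy hz ht
  set φ : ℝ → ℝ := fun t => f (y + t • v) - t * ⟪g y, v⟫ - L / 2 * t ^ 2 * ‖v‖ ^ 2
  have hφ : ∀ t ∈ Icc (0 : ℝ) 1,
      HasDerivAt φ (⟪g (y + t • v), v⟫ - ⟪g y, v⟫ - L * t * ‖v‖ ^ 2) t := fun t ht => by
    have hquad : HasDerivAt (fun t : ℝ => L / 2 * t ^ 2 * ‖v‖ ^ 2) (L * t * ‖v‖ ^ 2) t :=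
      (((hasDerivAt_pow 2 t).const_mul (L / 2)).mul_const _).congr_deriv (by ring)
    exact (((hgrad _ (hmem t ht)).hasDerivAt_add_smul).sub
      (hasDerivAt_mul_const ⟪g y, v⟫)).sub hquad
  have hφ_nonpos : ∀ t ∈ Ioo (0 : ℝ) 1,
      ⟪g (y + t • v), v⟫ - ⟪g y, v⟫ - L * t * ‖v‖ ^ 2 ≤ 0 := fun t ht => by
    have hgap : ‖g (y + t • v) - g y‖ ≤ L * (t * ‖v‖) := by
      simpa [norm_smul, abs_of_pos ht.1] using hlip _ (hmem t (Ioo_subset_Icc_self ht)) y hy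
    calc ⟪g (y + t • v), v⟫ - ⟪g y, v⟫ - L * t * ‖v‖ ^ 2
        = ⟪g (y + t • v) - g y, v⟫ - L * t * ‖v‖ ^ 2 := by rw [inner_sub_left]
      _ ≤ ‖g (y + t • v) - g y‖ * ‖v‖ - L * (t * ‖v‖) * ‖v‖ := by
          nlinarith [real_inner_le_norm (g (y + t • v) - g y) v]
      _ ≤ 0 := by nlinarith [norm_nonneg v]
  have hanti : AntitoneOn φ (Icc 0 1) := by
    refine antitoneOn_of_hasDerivWithinAt_nonpos (convex_Icc 0 1)
      (f' := fun t => ⟪g (y + t • v), v⟫ - ⟪g y, v⟫ - L * t * ‖v‖ ^ 2)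
      (fun t ht => (hφ t ht).continuousAt.continuousWithinAt) (fun t ht => ?_) ?_
    · rw [interior_Icc] at ht
      exact (hφ t (Ioo_subset_Icc_self ht)).hasDerivWithinAt
    · simpa only [interior_Icc] using hφ_nonpos
  have h01 := hanti (left_mem_Icc.2 zero_le_one) (right_mem_Icc.2 zero_le_one) zero_le_one
  simp only [φ, v, one_smul, zero_smul, add_zero, add_sub_cancel] at h01
  linarith

theorem ConvexOn.add_inner_sub_add_norm_sq_le {X s : Set E} (hf : ConvexOn ℝ X f)
    (hs : Convex ℝ s) (hsX : s ⊆ X) {g : E → E} (hgrad : ∀ x ∈ X, HasGradientAt f (g x) x) {L : ℝ}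
    (hlip : ∀ a ∈ s, ∀ b ∈ s, ‖g a - g b‖ ≤ L * ‖a - b‖) {y z : E} (hy : y ∈ s) (hz : z ∈ X)
    (hw : y - L⁻¹ • (g y - g z) ∈ s) :
    f z + ⟪g z, y - z⟫ + L⁻¹ / 2 * ‖g y - g z‖ ^ 2 ≤ f y := by
  set δ := g y - g z
  have hlower := hf.add_inner_sub_le_of_hasGradientAt hz (hsX hw) (hgrad z hz)
  have hupper := hs.le_add_inner_add_of_lipschitz_gradient (fun x hx => hgrad x (hsX hx)) hlip
    hy hw
  have hδ : L⁻¹ * ⟪g y, δ⟫ - L⁻¹ * ⟪g z, δ⟫ = L⁻¹ * ‖δ‖ ^ 2 := by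
    rw [← mul_sub, ← inner_sub_left, real_inner_self_eq_norm_sq]
  have hL : L / 2 * (L⁻¹ ^ 2 * ‖δ‖ ^ 2) = L⁻¹ / 2 * ‖δ‖ ^ 2 := by
    rcases eq_or_ne L 0 with rfl | hL
    · simp
    · field_simp
  rw [sub_right_comm, inner_sub_right, real_inner_smul_right] at hlower
  rw [sub_sub_cancel_left, inner_neg_right, real_inner_smul_right, norm_neg, norm_smul,
    Real.norm_eq_abs, abs_inv, mul_pow, inv_pow, sq_abs, ← inv_pow, hL] at hupper
  linarith

theorem ConvexOn.inv_mul_norm_sq_le_inner {X s : Set E} (hf : ConvexOn ℝ X f) (hs : Convex ℝ s)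
    (hsX : s ⊆ X) {g : E → E} (hgrad : ∀ x ∈ X, HasGradientAt f (g x) x) {L : ℝ}
    (hlip : ∀ a ∈ s, ∀ b ∈ s, ‖g a - g b‖ ≤ L * ‖a - b‖) {y z : E} (hy : y ∈ s) (hz : z ∈ s)
    (hwy : y - L⁻¹ • (g y - g z) ∈ s) (hwz : z - L⁻¹ • (g z - g y) ∈ s) :
    L⁻¹ * ‖g y - g z‖ ^ 2 ≤ ⟪g y - g z, y - z⟫ := by
  have hyz := hf.add_inner_sub_add_norm_sq_le hs hsX hgrad hlip hy (hsX hz) hwy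
  have hzy := hf.add_inner_sub_add_norm_sq_le hs hsX hgrad hlip hz (hsX hy) hwz
  rw [norm_sub_rev, ← neg_sub y z, inner_neg_right] at hzy
  rw [inner_sub_left]
  linarith

theorem ConvexOn.norm_gradient_sub_smul_le {X : Set E} (hf : ConvexOn ℝ X f) {g : E → E}
    (hgrad : ∀ x ∈ X, HasGradientAt f (g x) x) {x : E} {ρ L η : ℝ} (hball : closedBall x ρ ⊆ X)
    (hlip : ∀ a ∈ closedBall x ρ, ∀ b ∈ closedBall x ρ, ‖g a - g b‖ ≤ L * ‖a - b‖)
    (hL : 0 < L) (hη : 0 < η) (hηL : η * L ≤ 2) (hρ : 2 * (η * ‖g x‖) ≤ ρ) :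
    ‖g (x - η • g x)‖ ≤ ‖g x‖ := by
  set x' := x - η • g x
  set δ := g x' - g x
  have hdisp : x' - x = -(η • g x) := sub_sub_cancel_left _ _
  have hstep : dist x' x = η * ‖g x‖ := by
    rw [dist_eq_norm, hdisp, norm_neg, norm_smul, Real.norm_of_nonneg hη.le]
  have hx : x ∈ closedBall x ρ := mem_closedBall_self (by nlinarith [norm_nonneg (g x)])
  have hx' : x' ∈ closedBall x ρ :=
    sub_smul_mem_closedBall_self hη.le (by nlinarith [norm_nonneg (g x)])
  have hcorr : L⁻¹ * ‖δ‖ ≤ η * ‖g x‖ := by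
    rw [inv_mul_le_iff₀ hL, ← hstep, dist_eq_norm]
    exact hlip x' hx' x hx
  have hw : x' - L⁻¹ • δ ∈ closedBall x ρ :=
    closedBall_subset_closedBall' (by linarith)
      (sub_smul_mem_closedBall_self (inv_nonneg.2 hL.le) hcorr)
  have hw' : x - L⁻¹ • (g x - g x') ∈ closedBall x ρ :=
    sub_smul_mem_closedBall_self (inv_nonneg.2 hL.le) <| by
      rw [norm_sub_rev]
      exact hcorr.trans (by nlinarith [norm_nonneg (g x)])
  have hcoco := hf.inv_mul_norm_sq_le_inner (convex_closedBall x ρ) hball hgrad hlip hx' hx hw hw'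
  rw [hdisp, inner_neg_right, real_inner_smul_right, real_inner_comm] at hcoco
  have hδ : ‖δ‖ ^ 2 ≤ -(η * L * ⟪g x, δ⟫) :=
    calc ‖δ‖ ^ 2 = L * (L⁻¹ * ‖δ‖ ^ 2) := by field_simp
      _ ≤ L * -(η * ⟪g x, δ⟫) := by gcongr
      _ = -(η * L * ⟪g x, δ⟫) := by ring
  simpa [δ] using norm_add_le_of_norm_sq_le_neg_mul_inner (mul_pos hη hL) hηL hδ

end

theorem gd_step_gradient_nonincreasing_general (d : ℕ)
    (X : Set (EuclideanSpace ℝ (Fin d)))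
    (f : EuclideanSpace ℝ (Fin d) → ℝ) (hconv : ConvexOn ℝ X f)
    (g : EuclideanSpace ℝ (Fin d) → EuclideanSpace ℝ (Fin d))
    (hgrad : ∀ x ∈ X, HasGradientAt f (g x) x)
    (ℓ r : ℝ → ℝ) (hℓmono : Monotone ℓ) (hℓpos : ∀ u : ℝ, 0 ≤ u → 0 < ℓ u)
    (hranti : Antitone r)
    (hball : ∀ x ∈ X, Metric.closedBall x (r ‖g x‖) ⊆ X)
    (hlip : ∀ x ∈ X, ∀ x₁ ∈ Metric.closedBall x (r ‖g x‖),
      ∀ x₂ ∈ Metric.closedBall x (r ‖g x‖),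
        ‖g x₁ - g x₂‖ ≤ ℓ ‖g x‖ * ‖x₁ - x₂‖)
    (x : EuclideanSpace ℝ (Fin d)) (hx : x ∈ X) (G : ℝ) (hG : ‖g x‖ ≤ G)
    (η : ℝ) (hη0 : 0 < η) (hη : η ≤ min (2 / ℓ G) (r G / (2 * G))) :
    x - η • g x ∈ X ∧ ‖g (x - η • g x)‖ ≤ ‖g x‖ := by
  rcases eq_or_ne (g x) 0 with hgx | hgx
  · simp [hgx, hx]
  have hG₀ : 0 < G := (norm_pos_iff.2 hgx).trans_le hG
  have hL : 0 < ℓ ‖g x‖ := hℓpos _ (norm_nonneg _)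
  have hηL : η * ℓ ‖g x‖ ≤ 2 := by
    have hηG : η * ℓ G ≤ 2 :=
      (le_div_iff₀ (hL.trans_le (hℓmono hG))).1 (hη.trans (min_le_left _ _))
    nlinarith [hℓmono hG]
  have hρ : 2 * (η * ‖g x‖) ≤ r ‖g x‖ := by
    have hηG : η * (2 * G) ≤ r G := (le_div_iff₀ (by positivity)).1 (hη.trans (min_le_right _ _))
    nlinarith [hranti hG]
  refine ⟨hball x hx (sub_smul_mem_closedBall_self hη0.le ?_), ?_⟩
  · nlinarith [norm_nonneg (g x)]
  · exact hconv.norm_gradient_sub_smul_le hgrad (hball x hx) (hlip x hx) hL hη0 hηL hρ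

theorem gd_step_gradient_nonincreasing (d : ℕ)
    (X : Set (EuclideanSpace ℝ (Fin d))) (hX : IsOpen X) (hXconv : Convex ℝ X)
    (f : EuclideanSpace ℝ (Fin d) → ℝ) (hconv : ConvexOn ℝ X f)
    (g : EuclideanSpace ℝ (Fin d) → EuclideanSpace ℝ (Fin d))
    (hgrad : ∀ x ∈ X, HasGradientAt f (g x) x)
    (ℓ r : ℝ → ℝ) (hℓmono : Monotone ℓ) (hℓpos : ∀ u : ℝ, 0 ≤ u → 0 < ℓ u)
    (hranti : Antitone r) (hrpos : ∀ u : ℝ, 0 ≤ u → 0 < r u)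
    (hball : ∀ x ∈ X, Metric.closedBall x (r ‖g x‖) ⊆ X)
    (hlip : ∀ x ∈ X, ∀ x₁ ∈ Metric.closedBall x (r ‖g x‖),
      ∀ x₂ ∈ Metric.closedBall x (r ‖g x‖),
        ‖g x₁ - g x₂‖ ≤ ℓ ‖g x‖ * ‖x₁ - x₂‖)
    (x : EuclideanSpace ℝ (Fin d)) (hx : x ∈ X) (G : ℝ) (hG : ‖g x‖ ≤ G)
    (η : ℝ) (hη0 : 0 < η) (hη : η ≤ min (2 / ℓ G) (r G / (2 * G))) :
    x - η • g x ∈ X ∧ ‖g (x - η • g x)‖ ≤ ‖g x‖ :=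
  gd_step_gradient_nonincreasing_general d X f hconv g hgrad ℓ r hℓmono hℓpos hranti hball hlip x hx
    G hG η hη0 hη
end

section
/- Let f: 𝒳 → ℝ be μ-strongly convex with μ > 0 and (r,ℓ)-smooth on open convex 𝒳 ⊆ ℝ^d, with global minimizer x*. Let G = ‖∇f(x_0)‖, L = ℓ(G), and run gradient descent x_{t+1} = x_t − η∇f(x_t) with η ≤ min{1/L, r(G)/(2G)} and ημ < 1. Then for all T ≥ 1, f(x_T) − f(x*) ≤ [μ(1−ημ)^T / (2(1−(1−ημ)^T))]·‖x_0 − x*‖². -/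
open RealInnerProductSpace

open Set Metric Finset

/-!
Inside the ball `B(x, r ‖∇f x‖)` the gradient is `ℓ ‖∇f x‖`-Lipschitz, so the descent lemma and
cocoercivity of `∇f` hold there. With `η ≤ 1 / L` and `η ‖∇f x‖ ≤ r / 2` they show that a gradient
step stays in the ball, decreases `f` by `η / 2 ‖∇f x‖²`, and does not increase `‖∇f‖`. Hence
`‖∇f x_t‖ ≤ G` along the whole run, and the local constants never get worse than `ℓ G` and `r G`.
Strong convexity at `x*` then gives
`‖x_{t+1} - x*‖² ≤ (1 - ημ) ‖x_t - x*‖² - 2η (f x_{t+1} - f x*)`; unrolling this with `f x_t`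
non-increasing and summing the geometric series `∑_{i<T} (1 - ημ)^i = (1 - (1 - ημ)^T) / (ημ)`
gives the bound.
-/

theorem add_mul_geom_sum_le_pow_mul {D e : ℕ → ℝ} {q c : ℝ} (hq : 0 ≤ q) (hc : 0 ≤ c)
    (he : Antitone e) (hrec : ∀ t, D (t + 1) ≤ q * D t - c * e (t + 1)) (T : ℕ) :
    D T + c * e T * ∑ i ∈ range T, q ^ i ≤ q ^ T * D 0 := by
  induction T with
  | zero => simp
  | succ T ih =>
    have hsum : 0 ≤ ∑ i ∈ range T, q ^ i := sum_nonneg fun i _ => pow_nonneg hq i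
    have he_succ : c * q * e (T + 1) * ∑ i ∈ range T, q ^ i ≤ c * q * e T * ∑ i ∈ range T, q ^ i :=
      mul_le_mul_of_nonneg_right (mul_le_mul_of_nonneg_left (he T.le_succ) (by positivity)) hsum
    rw [geom_sum_succ, pow_succ']
    nlinarith [hrec T]

theorem le_of_mul_geom_sum_le {η μ e D : ℝ} {T : ℕ} (hη : 0 < η) (hμ : 0 < μ) (hημ : η * μ < 1)
    (hT : 1 ≤ T) (h : 2 * η * e * ∑ i ∈ range T, (1 - η * μ) ^ i ≤ (1 - η * μ) ^ T * D) :
    e ≤ μ * (1 - η * μ) ^ T / (2 * (1 - (1 - η * μ) ^ T)) * D := by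
  have hημ0 : 0 < η * μ := mul_pos hη hμ
  have hqT : (1 - η * μ) ^ T < 1 := pow_lt_one₀ (by linarith) (by linarith) (by omega)
  have hgeom : ∑ i ∈ range T, (1 - η * μ) ^ i = (1 - (1 - η * μ) ^ T) / (η * μ) := by
    rw [geom_sum_eq (by linarith) T]
    field_simp
    ring
  rw [hgeom] at h
  rw [div_mul_eq_mul_div, le_div_iff₀ (by linarith)]
  have hscale : 2 * η * e * ((1 - (1 - η * μ) ^ T) / (η * μ))
      = e * (2 * (1 - (1 - η * μ) ^ T)) / μ := by
    field_simp
  rw [hscale, div_le_iff₀ hμ] at h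
  linarith

theorem norm_sub_smul_sub_sq_le {E : Type*} [NormedAddCommGroup E] [InnerProductSpace ℝ E]
    {f : E → ℝ} {g : E → E} {x xstar : E} {μ η : ℝ} (hη : 0 ≤ η)
    (hsc : f x + ⟪g x, xstar - x⟫ + μ / 2 * ‖xstar - x‖ ^ 2 ≤ f xstar)
    (hdecrease : f (x - η • g x) ≤ f x - η / 2 * ‖g x‖ ^ 2) :
    ‖x - η • g x - xstar‖ ^ 2 ≤
      (1 - η * μ) * ‖x - xstar‖ ^ 2 - 2 * η * (f (x - η • g x) - f xstar) := by
  rw [sub_right_comm, norm_sub_sq_real, inner_smul_right, norm_smul, Real.norm_of_nonneg hη]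
  rw [← neg_sub x xstar, inner_neg_right, norm_neg, real_inner_comm] at hsc
  nlinarith

section Smooth

variable {E : Type*} [NormedAddCommGroup E] [InnerProductSpace ℝ E] [CompleteSpace E]
  {f : E → ℝ} {g : E → E} {L : ℝ}

/-- The descent lemma along a segment: `ψ s = f (a + s • v) - s ⟪g a, v⟫ - s² L ‖v‖² / 2` is
antitone on `[0, 1]` since its derivative is `⟪g (a + s • v) - g a, v⟫ - s L ‖v‖² ≤ 0`. -/
theorem descent_lemma_segment {a v : E}
    (hgrad : ∀ s ∈ Icc (0 : ℝ) 1, HasGradientAt f (g (a + s • v)) (a + s • v))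
    (hlip : ∀ s ∈ Icc (0 : ℝ) 1, ‖g (a + s • v) - g a‖ ≤ L * (s * ‖v‖)) :
    f (a + v) ≤ f a + ⟪g a, v⟫ + L / 2 * ‖v‖ ^ 2 := by
  set ψ : ℝ → ℝ := fun s => f (a + s • v) - s * ⟪g a, v⟫ - s ^ 2 * (L / 2 * ‖v‖ ^ 2)
  have hψ : ∀ s ∈ Icc (0 : ℝ) 1,
      HasDerivAt ψ (⟪g (a + s • v), v⟫ - ⟪g a, v⟫ - 2 * s * (L / 2 * ‖v‖ ^ 2)) s := by
    intro s hs
    have hline : HasDerivAt (fun u : ℝ => a + u • v) v s := by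
      simpa using ((hasDerivAt_id s).smul_const v).const_add a
    have hf : HasDerivAt (fun u : ℝ => f (a + u • v)) ⟪g (a + s • v), v⟫ s := by
      simpa [InnerProductSpace.toDual_apply_apply, Function.comp_def] using
        (hgrad s hs).hasFDerivAt.comp_hasDerivAt s hline
    have hquad := (hasDerivAt_pow 2 s).mul_const (L / 2 * ‖v‖ ^ 2)
    norm_num at hquad
    exact (hf.sub (hasDerivAt_mul_const _)).sub hquad
  have hanti : AntitoneOn ψ (Icc 0 1) := by
    refine antitoneOn_of_hasDerivWithinAt_nonpos (convex_Icc 0 1)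
      (fun s hs => (hψ s hs).continuousAt.continuousWithinAt)
      (fun s hs => (hψ s (interior_subset hs)).hasDerivWithinAt) fun s hs => ?_
    rw [interior_Icc] at hs
    have hinner : ⟪g (a + s • v), v⟫ - ⟪g a, v⟫ ≤ L * (s * ‖v‖) * ‖v‖ := by
      rw [← inner_sub_left]
      exact (real_inner_le_norm _ _).trans
        (mul_le_mul_of_nonneg_right (hlip s (Ioo_subset_Icc_self hs)) (norm_nonneg v))
    nlinarith
  have h := hanti (left_mem_Icc.2 zero_le_one) (right_mem_Icc.2 zero_le_one) zero_le_one
  simp only [ψ, one_smul, zero_smul, add_zero, one_pow, one_mul, zero_mul, sub_zero] at h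
  linarith

theorem Convex.descent_lemma {S : Set E} (hS : Convex ℝ S)
    (hgrad : ∀ y ∈ S, HasGradientAt f (g y) y)
    (hlip : ∀ a ∈ S, ∀ b ∈ S, ‖g a - g b‖ ≤ L * ‖a - b‖) {y v : E} (hy : y ∈ S)
    (hyv : y + v ∈ S) :
    f (y + v) ≤ f y + ⟪g y, v⟫ + L / 2 * ‖v‖ ^ 2 := by
  have hseg : ∀ s ∈ Icc (0 : ℝ) 1, y + s • v ∈ S := fun s hs => hS.add_smul_mem hy hyv hs
  refine descent_lemma_segment (fun s hs => hgrad _ (hseg s hs)) fun s hs => ?_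
  calc ‖g (y + s • v) - g y‖ ≤ L * ‖y + s • v - y‖ := hlip _ (hseg s hs) _ hy
    _ = L * (s * ‖v‖) := by rw [add_sub_cancel_left, norm_smul, Real.norm_of_nonneg hs.1]

/-- Descent from `w` along `-(g w - g u) / L`, compared with the tangent plane of `f` at `u`. -/
theorem Convex.sub_le_inner_sub_sq_norm_div {S : Set E} (hS : Convex ℝ S)
    (hgrad : ∀ y ∈ S, HasGradientAt f (g y) y)
    (hconv : ∀ a ∈ S, ∀ b ∈ S, f a + ⟪g a, b - a⟫ ≤ f b)
    (hlip : ∀ a ∈ S, ∀ b ∈ S, ‖g a - g b‖ ≤ L * ‖a - b‖) (hL : 0 < L) {u w : E}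
    (hu : u ∈ S) (hw : w ∈ S) (hw' : w - L⁻¹ • (g w - g u) ∈ S) :
    f u - f w ≤ ⟪g u, u - w⟫ - ‖g w - g u‖ ^ 2 / (2 * L) := by
  set Δ := g w - g u
  rw [sub_eq_add_neg] at hw'
  have hdesc := hS.descent_lemma hgrad hlip hw hw'
  have htangent := hconv u hu _ hw'
  have hΔ : ⟪g w, Δ⟫ - ⟪g u, Δ⟫ = ‖Δ‖ ^ 2 := by
    rw [← inner_sub_left, real_inner_self_eq_norm_sq]
  simp only [inner_neg_right, inner_add_right, inner_sub_right, real_inner_smul_right, norm_neg,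
    norm_smul, Real.norm_of_nonneg (inv_nonneg.2 hL.le)] at hdesc htangent
  have hquad : L / 2 * (L⁻¹ * ‖Δ‖) ^ 2 = ‖Δ‖ ^ 2 / (2 * L) := by field_simp
  rw [inner_sub_right]
  linear_combination htangent + hdesc - L⁻¹ * hΔ + hquad

theorem Convex.sq_norm_sub_div_le_inner_sub {S : Set E} (hS : Convex ℝ S)
    (hgrad : ∀ y ∈ S, HasGradientAt f (g y) y)
    (hconv : ∀ a ∈ S, ∀ b ∈ S, f a + ⟪g a, b - a⟫ ≤ f b)
    (hlip : ∀ a ∈ S, ∀ b ∈ S, ‖g a - g b‖ ≤ L * ‖a - b‖) (hL : 0 < L) {u w : E}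
    (hu : u ∈ S) (hw : w ∈ S) (hu' : u + L⁻¹ • (g w - g u) ∈ S)
    (hw' : w - L⁻¹ • (g w - g u) ∈ S) :
    ‖g w - g u‖ ^ 2 / L ≤ ⟪g w - g u, w - u⟫ := by
  rw [← neg_sub (g u), smul_neg, ← sub_eq_add_neg] at hu'
  have huw := hS.sub_le_inner_sub_sq_norm_div hgrad hconv hlip hL hu hw hw'
  have hwu := hS.sub_le_inner_sub_sq_norm_div hgrad hconv hlip hL hw hu hu'
  rw [norm_sub_rev] at hwu
  have hsum : ⟪g w - g u, w - u⟫ = ⟪g u, u - w⟫ + ⟪g w, w - u⟫ := by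
    rw [inner_sub_left, ← neg_sub w u, inner_neg_right]; ring
  have hhalf : ‖g w - g u‖ ^ 2 / L = 2 * (‖g w - g u‖ ^ 2 / (2 * L)) := by field_simp
  linarith

variable {x : E} {ρ η : ℝ}

theorem gradient_step_sufficient_decrease
    (hgrad : ∀ y ∈ closedBall x ρ, HasGradientAt f (g y) y)
    (hlip : ∀ a ∈ closedBall x ρ, ∀ b ∈ closedBall x ρ, ‖g a - g b‖ ≤ L * ‖a - b‖)
    (hη : 0 ≤ η) (hηL : η * L ≤ 1) (hstep : η * ‖g x‖ ≤ ρ) :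
    f (x - η • g x) ≤ f x - η / 2 * ‖g x‖ ^ 2 := by
  have hnorm : ‖-(η • g x)‖ = η * ‖g x‖ := by rw [norm_neg, norm_smul, Real.norm_of_nonneg hη]
  have hx : x ∈ closedBall x ρ := mem_closedBall_self ((by positivity : 0 ≤ η * ‖g x‖).trans hstep)
  have hx' : x + -(η • g x) ∈ closedBall x ρ := by
    rwa [mem_closedBall, dist_eq_norm, add_sub_cancel_left, hnorm]
  have hdesc := (convex_closedBall x ρ).descent_lemma hgrad hlip hx hx'
  rw [← sub_eq_add_neg, hnorm, inner_neg_right, real_inner_smul_right,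
    real_inner_self_eq_norm_sq] at hdesc
  nlinarith [mul_nonneg (mul_nonneg hη (sub_nonneg.2 hηL)) (sq_nonneg ‖g x‖)]

/-- Cocoercivity of `g` between `x` and `x - η • g x`; the points it needs stay within `2 η ‖g x‖`
of `x` because `‖g (x - η • g x) - g x‖ / L ≤ η ‖g x‖`. -/
theorem norm_gradient_step_le
    (hgrad : ∀ y ∈ closedBall x ρ, HasGradientAt f (g y) y)
    (hconv : ∀ a ∈ closedBall x ρ, ∀ b ∈ closedBall x ρ, f a + ⟪g a, b - a⟫ ≤ f b)
    (hlip : ∀ a ∈ closedBall x ρ, ∀ b ∈ closedBall x ρ, ‖g a - g b‖ ≤ L * ‖a - b‖)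
    (hL : 0 < L) (hη : 0 < η) (hηL : η * L ≤ 1) (hstep : 2 * (η * ‖g x‖) ≤ ρ) :
    ‖g (x - η • g x)‖ ≤ ‖g x‖ := by
  set w := x - η • g x
  set Δ := g w - g x
  have hwx : ‖w - x‖ = η * ‖g x‖ := by
    rw [sub_sub_cancel_left, norm_neg, norm_smul, Real.norm_of_nonneg hη.le]
  have hx : x ∈ closedBall x ρ := mem_closedBall_self (by nlinarith [norm_nonneg (g x)])
  have hw : w ∈ closedBall x ρ := by
    rw [mem_closedBall, dist_eq_norm, hwx]; nlinarith [norm_nonneg (g x)]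
  have hΔ : ‖L⁻¹ • Δ‖ ≤ η * ‖g x‖ := by
    rw [norm_smul, Real.norm_of_nonneg (inv_nonneg.2 hL.le), inv_mul_le_iff₀ hL, ← hwx]
    exact hlip w hw x hx
  have hx' : x + L⁻¹ • Δ ∈ closedBall x ρ := by
    rw [mem_closedBall, dist_eq_norm, add_sub_cancel_left]
    nlinarith [norm_nonneg (g x)]
  have hw' : w - L⁻¹ • Δ ∈ closedBall x ρ := by
    rw [mem_closedBall, dist_eq_norm, sub_right_comm]
    linarith [norm_sub_le (w - x) (L⁻¹ • Δ)]
  have hcoco :=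
    (convex_closedBall x ρ).sq_norm_sub_div_le_inner_sub hgrad hconv hlip hL hx hw hx' hw'
  rw [sub_sub_cancel_left, inner_neg_right, real_inner_smul_right, div_le_iff₀ hL,
    real_inner_comm] at hcoco
  have hΔ_nonpos : ⟪g x, Δ⟫ ≤ 0 := by nlinarith [sq_nonneg ‖Δ‖, mul_pos hη hL]
  have hsq : ‖g x + Δ‖ ^ 2 ≤ ‖g x‖ ^ 2 := by
    rw [norm_add_sq_real]; nlinarith
  rwa [show g x + Δ = g w from add_sub_cancel _ _,
    pow_le_pow_iff_left₀ (norm_nonneg _) (norm_nonneg _) two_ne_zero] at hsq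

theorem gradient_step_of_rl_smooth {X : Set E} {ℓ r : ℝ → ℝ} {G : ℝ}
    (hgrad : ∀ y ∈ X, HasGradientAt f (g y) y)
    (hconv : ∀ a ∈ X, ∀ b ∈ X, f a + ⟪g a, b - a⟫ ≤ f b)
    (hℓmono : Monotone ℓ) (hℓpos : ∀ u : ℝ, 0 ≤ u → 0 < ℓ u) (hranti : Antitone r)
    (hball : ∀ y ∈ X, closedBall y (r ‖g y‖) ⊆ X)
    (hlip : ∀ y ∈ X, ∀ a ∈ closedBall y (r ‖g y‖), ∀ b ∈ closedBall y (r ‖g y‖),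
      ‖g a - g b‖ ≤ ℓ ‖g y‖ * ‖a - b‖)
    (hη : 0 < η) (hηL : η * ℓ G ≤ 1) (hηr : 2 * (η * G) ≤ r G) (hx : x ∈ X) (hxG : ‖g x‖ ≤ G) :
    x - η • g x ∈ X ∧ ‖g (x - η • g x)‖ ≤ ‖g x‖ ∧ f (x - η • g x) ≤ f x - η / 2 * ‖g x‖ ^ 2 := by
  have hB := hball x hx
  have hBgrad : ∀ y ∈ closedBall x (r ‖g x‖), HasGradientAt f (g y) y := fun y hy => hgrad y (hB hy)
  have hBconv : ∀ a ∈ closedBall x (r ‖g x‖), ∀ b ∈ closedBall x (r ‖g x‖),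
      f a + ⟪g a, b - a⟫ ≤ f b := fun a ha b hb => hconv a (hB ha) b (hB hb)
  have hηLx : η * ℓ ‖g x‖ ≤ 1 := (mul_le_mul_of_nonneg_left (hℓmono hxG) hη.le).trans hηL
  have hηrx : 2 * (η * ‖g x‖) ≤ r ‖g x‖ := by nlinarith [hranti hxG]
  refine ⟨hB ?_, norm_gradient_step_le hBgrad hBconv (hlip x hx) (hℓpos _ (norm_nonneg _)) hη
    hηLx hηrx, gradient_step_sufficient_decrease hBgrad (hlip x hx) hη.le hηLx (by
      nlinarith [norm_nonneg (g x)])⟩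
  rw [mem_closedBall, dist_eq_norm, sub_sub_cancel_left, norm_neg, norm_smul,
    Real.norm_of_nonneg hη.le]
  nlinarith [norm_nonneg (g x)]

end Smooth

theorem gd_strongly_convex_convergence_general (d : ℕ)
    (X : Set (EuclideanSpace ℝ (Fin d)))
    (f : EuclideanSpace ℝ (Fin d) → ℝ)
    (g : EuclideanSpace ℝ (Fin d) → EuclideanSpace ℝ (Fin d))
    (hgrad : ∀ x ∈ X, HasGradientAt f (g x) x)
    (μ : ℝ) (hμ : 0 < μ)
    (hsc : ∀ x ∈ X, ∀ y ∈ X, f y ≥ f x + ⟪g x, y - x⟫ + μ / 2 * ‖y - x‖ ^ 2)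
    (ℓ r : ℝ → ℝ) (hℓmono : Monotone ℓ) (hℓpos : ∀ u : ℝ, 0 ≤ u → 0 < ℓ u)
    (hranti : Antitone r)
    (hball : ∀ x ∈ X, Metric.closedBall x (r ‖g x‖) ⊆ X)
    (hlip : ∀ x ∈ X, ∀ x₁ ∈ Metric.closedBall x (r ‖g x‖),
      ∀ x₂ ∈ Metric.closedBall x (r ‖g x‖),
        ‖g x₁ - g x₂‖ ≤ ℓ ‖g x‖ * ‖x₁ - x₂‖)
    (xstar : EuclideanSpace ℝ (Fin d)) (hxstar : xstar ∈ X)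
    (x : ℕ → EuclideanSpace ℝ (Fin d)) (hx0 : x 0 ∈ X)
    (η : ℝ) (hη0 : 0 < η) (hημ : η * μ < 1)
    (hη : η ≤ min (1 / ℓ ‖g (x 0)‖) (r ‖g (x 0)‖ / (2 * ‖g (x 0)‖)))
    (hupdate : ∀ t : ℕ, x (t + 1) = x t - η • g (x t)) :
    ∀ T : ℕ, 1 ≤ T →
      f (x T) - f xstar ≤
        μ * (1 - η * μ) ^ T / (2 * (1 - (1 - η * μ) ^ T)) * ‖x 0 - xstar‖ ^ 2 := by
  set G := ‖g (x 0)‖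
  have hG : 0 < G := by
    by_contra! hG0
    have : η ≤ 0 := by simpa [le_antisymm hG0 (norm_nonneg _)] using hη.trans (min_le_right _ _)
    linarith
  have hηL : η * ℓ G ≤ 1 := by
    rw [← le_div_iff₀ (hℓpos G hG.le)]; exact hη.trans (min_le_left _ _)
  have hηr : 2 * (η * G) ≤ r G := by
    rw [← mul_assoc, mul_comm 2, mul_assoc, ← le_div_iff₀ (by positivity)]
    exact hη.trans (min_le_right _ _)
  have hconv : ∀ a ∈ X, ∀ b ∈ X, f a + ⟪g a, b - a⟫ ≤ f b := fun a ha b hb => by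
    nlinarith [hsc a ha b hb, sq_nonneg ‖b - a‖]
  have hstep := fun {y} (hy : y ∈ X) (hyG : ‖g y‖ ≤ G) => gradient_step_of_rl_smooth hgrad
    hconv hℓmono hℓpos hranti hball hlip hη0 hηL hηr hy hyG
  have hinv : ∀ t, x t ∈ X ∧ ‖g (x t)‖ ≤ G := by
    intro t
    induction t with
    | zero => exact ⟨hx0, le_rfl⟩
    | succ t ih =>
      obtain ⟨hmem, hnorm_le, -⟩ := hstep ih.1 ih.2
      exact hupdate t ▸ ⟨hmem, hnorm_le.trans ih.2⟩
  have hdecrease : ∀ t, f (x (t + 1)) ≤ f (x t) - η / 2 * ‖g (x t)‖ ^ 2 := fun t =>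
    hupdate t ▸ (hstep (hinv t).1 (hinv t).2).2.2
  have hunroll := add_mul_geom_sum_le_pow_mul (D := fun t => ‖x t - xstar‖ ^ 2)
    (e := fun t => f (x t) - f xstar) (q := 1 - η * μ) (c := 2 * η) (by linarith) (by linarith)
    (antitone_nat_of_succ_le fun t => by nlinarith [hdecrease t])
    (fun t => hupdate t ▸ norm_sub_smul_sub_sq_le hη0.le (hsc _ (hinv t).1 _ hxstar)
      (hupdate t ▸ hdecrease t))
  intro T hT
  exact le_of_mul_geom_sum_le hη0 hμ hημ hT (by linarith [hunroll T, sq_nonneg ‖x T - xstar‖])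

theorem gd_strongly_convex_convergence (d : ℕ)
    (X : Set (EuclideanSpace ℝ (Fin d))) (hX : IsOpen X) (hXconv : Convex ℝ X)
    (f : EuclideanSpace ℝ (Fin d) → ℝ)
    (g : EuclideanSpace ℝ (Fin d) → EuclideanSpace ℝ (Fin d))
    (hgrad : ∀ x ∈ X, HasGradientAt f (g x) x)
    (μ : ℝ) (hμ : 0 < μ)
    (hsc : ∀ x ∈ X, ∀ y ∈ X, f y ≥ f x + ⟪g x, y - x⟫ + μ / 2 * ‖y - x‖ ^ 2)
    (ℓ r : ℝ → ℝ) (hℓmono : Monotone ℓ) (hℓpos : ∀ u : ℝ, 0 ≤ u → 0 < ℓ u)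
    (hranti : Antitone r) (hrpos : ∀ u : ℝ, 0 ≤ u → 0 < r u)
    (hball : ∀ x ∈ X, Metric.closedBall x (r ‖g x‖) ⊆ X)
    (hlip : ∀ x ∈ X, ∀ x₁ ∈ Metric.closedBall x (r ‖g x‖),
      ∀ x₂ ∈ Metric.closedBall x (r ‖g x‖),
        ‖g x₁ - g x₂‖ ≤ ℓ ‖g x‖ * ‖x₁ - x₂‖)
    (xstar : EuclideanSpace ℝ (Fin d)) (hxstar : xstar ∈ X)
    (hmin : ∀ y ∈ X, f xstar ≤ f y)
    (x : ℕ → EuclideanSpace ℝ (Fin d)) (hx0 : x 0 ∈ X)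
    (η : ℝ) (hη0 : 0 < η) (hημ : η * μ < 1)
    (hη : η ≤ min (1 / ℓ ‖g (x 0)‖) (r ‖g (x 0)‖ / (2 * ‖g (x 0)‖)))
    (hupdate : ∀ t : ℕ, x (t + 1) = x t - η • g (x t)) :
    ∀ T : ℕ, 1 ≤ T →
      f (x T) - f xstar ≤
        μ * (1 - η * μ) ^ T / (2 * (1 - (1 - η * μ) ^ T)) * ‖x 0 - xstar‖ ^ 2 :=
  gd_strongly_convex_convergence_general d X f g hgrad μ hμ hsc ℓ r hℓmono hℓpos hranti hball hlip
    xstar hxstar x hx0 η hη0 hημ hη hupdate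
end

section
/- Let f: 𝒳 → ℝ be (r,ℓ)-smooth on open 𝒳 ⊆ ℝ^d with ℓ sub-quadratic (lim_{u→∞} ℓ(u)/u² = 0), bounded below by f*, and let G satisfy G ≥ max{√(32 ℓ(G)(f(x_0) − f*)), 2‖∇f(x_0)‖}. Let L = ℓ(G) and run gradient descent x_{t+1} = x_t − η∇f(x_t) with η ≤ min{r(G)/G, 1/(4L)}. Then ‖∇f(x_t)‖ ≤ G for all t ≥ 0, and (1/T)∑_{t<T} ‖∇f(x_t)‖² ≤ 2(f(x_0) − f*)/(ηT). -/
open Filter Metric InnerProductSpace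

/-!
While `‖∇f(x)‖ ≤ G`, a gradient step of length `η ≤ r(G)/G` stays in the ball around `x` on
which `∇f` is `ℓ(G)`-Lipschitz, so the gradient norm grows at most by the factor `1 + ηℓ(G)`
while `f` decreases by at least `(3/4)η‖∇f(x)‖²` (as `ηℓ(G) ≤ 1/4`). These two effects balance
in the potential `‖∇f(x_t)‖² + 8ℓ(G)(f(x_t) - f*)`, which therefore never increases; the choice
of `G` makes it start below `G²`, so `‖∇f(x_t)‖ ≤ G` persists forever. Telescoping the decrease
of `f` then bounds the average squared gradient norm.
-/

theorem mul_le_of_le_div_of_antitone {r : ℝ → ℝ} (hr : Antitone r) {η a G : ℝ} (hη : 0 ≤ η)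
    (haG : a ≤ G) (hra : 0 ≤ r a) (hηG : η ≤ r G / G) : η * a ≤ r a := by
  rcases le_or_gt a 0 with ha | ha
  · exact (mul_nonpos_of_nonneg_of_nonpos hη ha).trans hra
  · have hG : 0 < G := ha.trans_le haG
    calc η * a ≤ η * G := mul_le_mul_of_nonneg_left haG hη
      _ ≤ r G := (le_div_iff₀ hG).1 hηG
      _ ≤ r a := hr haG

theorem mul_sum_range_le_sub_of_le_sub {F a : ℕ → ℝ} {c : ℝ}
    (h : ∀ t, F (t + 1) ≤ F t - c * a t) (T : ℕ) :
    c * ∑ t ∈ Finset.range T, a t ≤ F 0 - F T := by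
  rw [Finset.mul_sum, ← Finset.sum_range_sub']
  exact Finset.sum_le_sum fun t _ => by linarith [h t]

theorem sub_smul_mem_closedBall {E : Type*} [NormedAddCommGroup E] [NormedSpace ℝ E] {y v : E}
    {η ρ : ℝ} (hη : 0 ≤ η) (hstep : η * ‖v‖ ≤ ρ) :
    y - η • v ∈ closedBall y ρ := by
  rwa [mem_closedBall_iff_norm, sub_sub_cancel_left, norm_neg, norm_smul, Real.norm_of_nonneg hη]

section GradientDescent

variable {E : Type*} [NormedAddCommGroup E] [InnerProductSpace ℝ E] [CompleteSpace E]

/-- `(r, ℓ)`-smoothness of `f` on `X`, with gradient `g`, minus the monotonicity and positivity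
conditions on `r` and `ℓ`, which are stated separately. -/
structure IsRLSmoothOn (X : Set E) (f : E → ℝ) (g : E → E) (r ℓ : ℝ → ℝ) : Prop where
  hasGradientAt : ∀ x ∈ X, HasGradientAt f (g x) x
  closedBall_subset : ∀ x ∈ X, closedBall x (r ‖g x‖) ⊆ X
  norm_sub_le : ∀ x ∈ X, ∀ x₁ ∈ closedBall x (r ‖g x‖), ∀ x₂ ∈ closedBall x (r ‖g x‖),
    ‖g x₁ - g x₂‖ ≤ ℓ ‖g x‖ * ‖x₁ - x₂‖

theorem le_add_inner_add_mul_sq_of_hasGradientAt {f : E → ℝ} {g : E → E} {y z : E} {L : ℝ}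
    (hL : 0 ≤ L) (hgrad : ∀ w ∈ closedBall y ‖z - y‖, HasGradientAt f (g w) w)
    (hlip : ∀ w ∈ closedBall y ‖z - y‖, ‖g w - g y‖ ≤ L * ‖w - y‖) :
    f z ≤ f y + ⟪g y, z - y⟫_ℝ + L * ‖z - y‖ ^ 2 := by
  have hderiv : ∀ w ∈ closedBall y ‖z - y‖,
      HasFDerivWithinAt f (toDual ℝ E (g w)) (closedBall y ‖z - y‖) w :=
    fun w hw => (hgrad w hw).hasFDerivAt.hasFDerivWithinAt
  have hbound : ∀ w ∈ closedBall y ‖z - y‖,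
      ‖toDual ℝ E (g w) - toDual ℝ E (g y)‖ ≤ L * ‖z - y‖ := by
    intro w hw
    rw [← map_sub, LinearIsometryEquiv.norm_map]
    exact (hlip w hw).trans (mul_le_mul_of_nonneg_left (mem_closedBall_iff_norm.1 hw) hL)
  have hmvt := (convex_closedBall y ‖z - y‖).norm_image_sub_le_of_norm_hasFDerivWithin_le'
    hderiv hbound (mem_closedBall_self (norm_nonneg _)) (mem_closedBall_iff_norm.2 le_rfl)
  rw [toDual_apply_apply, Real.norm_eq_abs] at hmvt
  linarith [le_abs_self (f z - f y - ⟪g y, z - y⟫_ℝ)]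

namespace IsRLSmoothOn

variable {X : Set E} {f : E → ℝ} {g : E → E} {r ℓ : ℝ → ℝ} {y : E} {η : ℝ}

theorem sub_smul_mem (hf : IsRLSmoothOn X f g r ℓ) (hy : y ∈ X) (hη : 0 ≤ η)
    (hstep : η * ‖g y‖ ≤ r ‖g y‖) : y - η • g y ∈ X :=
  hf.closedBall_subset y hy (sub_smul_mem_closedBall hη hstep)

theorem norm_grad_sub_smul_le (hf : IsRLSmoothOn X f g r ℓ) (hy : y ∈ X) (hη : 0 ≤ η)
    (hstep : η * ‖g y‖ ≤ r ‖g y‖) :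
    ‖g (y - η • g y)‖ ≤ (1 + η * ℓ ‖g y‖) * ‖g y‖ := by
  have hy_mem : y ∈ closedBall y (r ‖g y‖) :=
    mem_closedBall_self ((mul_nonneg hη (norm_nonneg _)).trans hstep)
  have hlip := hf.norm_sub_le y hy _ (sub_smul_mem_closedBall hη hstep) y hy_mem
  rw [sub_sub_cancel_left, norm_neg, norm_smul, Real.norm_of_nonneg hη] at hlip
  calc ‖g (y - η • g y)‖ ≤ ‖g (y - η • g y) - g y‖ + ‖g y‖ := norm_le_norm_sub_add _ _
    _ ≤ (1 + η * ℓ ‖g y‖) * ‖g y‖ := by linarith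

theorem apply_sub_smul_le (hf : IsRLSmoothOn X f g r ℓ) (hy : y ∈ X) (hη : 0 ≤ η)
    (hstep : η * ‖g y‖ ≤ r ‖g y‖) (hℓ : 0 ≤ ℓ ‖g y‖) :
    f (y - η • g y) ≤ f y - η * (1 - η * ℓ ‖g y‖) * ‖g y‖ ^ 2 := by
  have hdist : ‖y - η • g y - y‖ = η * ‖g y‖ := by
    rw [sub_sub_cancel_left, norm_neg, norm_smul, Real.norm_of_nonneg hη]
  have hball : closedBall y ‖y - η • g y - y‖ ⊆ closedBall y (r ‖g y‖) :=
    closedBall_subset_closedBall (hdist.trans_le hstep)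
  have hy_mem : y ∈ closedBall y (r ‖g y‖) :=
    mem_closedBall_self ((mul_nonneg hη (norm_nonneg _)).trans hstep)
  have h := le_add_inner_add_mul_sq_of_hasGradientAt hℓ
    (fun w hw => hf.hasGradientAt w (hf.closedBall_subset y hy (hball hw)))
    (fun w hw => hf.norm_sub_le y hy w (hball hw) y hy_mem)
  rw [hdist, sub_sub_cancel_left, inner_neg_right, real_inner_smul_right,
    real_inner_self_eq_norm_sq] at h
  linarith

variable {G : ℝ}

theorem gradient_step_of_norm_le (hf : IsRLSmoothOn X f g r ℓ) (hℓmono : Monotone ℓ)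
    (hℓpos : ∀ u : ℝ, 0 ≤ u → 0 < ℓ u) (hranti : Antitone r) (hrpos : ∀ u : ℝ, 0 ≤ u → 0 < r u)
    (hy : y ∈ X) (hyG : ‖g y‖ ≤ G) (hη : 0 ≤ η) (hηr : η ≤ r G / G) (hηℓ : η * ℓ G ≤ 1 / 4) :
    y - η • g y ∈ X ∧
      ‖g (y - η • g y)‖ ^ 2 + 8 * ℓ G * f (y - η • g y) ≤ ‖g y‖ ^ 2 + 8 * ℓ G * f y ∧
      f (y - η • g y) ≤ f y - 3 / 4 * η * ‖g y‖ ^ 2 := by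
  have hstep : η * ‖g y‖ ≤ r ‖g y‖ :=
    mul_le_of_le_div_of_antitone hranti hη hyG (hrpos _ (norm_nonneg _)).le hηr
  have hℓy : 0 < ℓ ‖g y‖ := hℓpos _ (norm_nonneg _)
  have hℓ_le : η * ℓ ‖g y‖ ≤ η * ℓ G := mul_le_mul_of_nonneg_left (hℓmono hyG) hη
  have hnorm := hf.norm_grad_sub_smul_le hy hη hstep
  have hval := hf.apply_sub_smul_le hy hη hstep hℓy.le
  have hdesc : f (y - η • g y) ≤ f y - 3 / 4 * η * ‖g y‖ ^ 2 := by
    nlinarith [mul_nonneg hη (sq_nonneg ‖g y‖)]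
  refine ⟨hf.sub_smul_mem hy hη hstep, ?_, hdesc⟩
  -- for `u = ηℓ(G) ≤ 1/4`, `(1 + u)² ≤ 1 + 6u`, and `6u = 8ℓ(G) · (3/4)η` is the weight of
  -- the decrease of `f` in the potential
  have hsq : ‖g (y - η • g y)‖ ^ 2 ≤ (1 + η * ℓ G) ^ 2 * ‖g y‖ ^ 2 := by
    rw [← mul_pow]
    exact pow_le_pow_left₀ (norm_nonneg _) (hnorm.trans (by gcongr)) 2
  have hℓG0 : 0 ≤ ℓ G := (hℓpos G ((norm_nonneg _).trans hyG)).le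
  have hu : 0 ≤ η * ℓ G := mul_nonneg hη hℓG0
  nlinarith [mul_le_mul_of_nonneg_right hηℓ (mul_nonneg hu (sq_nonneg ‖g y‖)),
    mul_le_mul_of_nonneg_left hdesc (by positivity : (0 : ℝ) ≤ 8 * ℓ G)]

theorem gradientDescent_mem_and_norm_le (hf : IsRLSmoothOn X f g r ℓ) (hℓmono : Monotone ℓ)
    (hℓpos : ∀ u : ℝ, 0 ≤ u → 0 < ℓ u) (hranti : Antitone r) (hrpos : ∀ u : ℝ, 0 ≤ u → 0 < r u)
    {fstar : ℝ} (hfstar : ∀ x ∈ X, fstar ≤ f x) {x : ℕ → E} (hx0 : x 0 ∈ X)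
    (hupdate : ∀ t : ℕ, x (t + 1) = x t - η • g (x t)) (hG : 0 ≤ G)
    (hη : 0 ≤ η) (hηr : η ≤ r G / G) (hηℓ : η * ℓ G ≤ 1 / 4)
    (hx0G : ‖g (x 0)‖ ^ 2 + 8 * ℓ G * (f (x 0) - fstar) ≤ G ^ 2) :
    ∀ t : ℕ, x t ∈ X ∧ ‖g (x t)‖ ≤ G := by
  have hℓG : 0 ≤ ℓ G := (hℓpos G hG).le
  have norm_le {y : E} (hy : y ∈ X) (hyG : ‖g y‖ ^ 2 + 8 * ℓ G * (f y - fstar) ≤ G ^ 2) :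
      ‖g y‖ ≤ G :=
    le_of_sq_le_sq (by nlinarith [mul_nonneg hℓG (sub_nonneg.2 (hfstar y hy))]) hG
  suffices h : ∀ t : ℕ, x t ∈ X ∧ ‖g (x t)‖ ^ 2 + 8 * ℓ G * (f (x t) - fstar) ≤ G ^ 2 from
    fun t => ⟨(h t).1, norm_le (h t).1 (h t).2⟩
  intro t
  induction t with
  | zero => exact ⟨hx0, hx0G⟩
  | succ t ih =>
    obtain ⟨hmem, hpot, -⟩ := hf.gradient_step_of_norm_le hℓmono hℓpos hranti hrpos ih.1
      (norm_le ih.1 ih.2) hη hηr hηℓ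
    rw [← hupdate t] at hmem hpot
    exact ⟨hmem, by linarith [ih.2]⟩

end IsRLSmoothOn

end GradientDescent

theorem gd_nonconvex_convergence_general (d : ℕ)
    (X : Set (EuclideanSpace ℝ (Fin d)))
    (f : EuclideanSpace ℝ (Fin d) → ℝ)
    (g : EuclideanSpace ℝ (Fin d) → EuclideanSpace ℝ (Fin d))
    (hgrad : ∀ x ∈ X, HasGradientAt f (g x) x)
    (ℓ r : ℝ → ℝ) (hℓmono : Monotone ℓ) (hℓpos : ∀ u : ℝ, 0 ≤ u → 0 < ℓ u)
    (hranti : Antitone r) (hrpos : ∀ u : ℝ, 0 ≤ u → 0 < r u)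
    (hball : ∀ x ∈ X, Metric.closedBall x (r ‖g x‖) ⊆ X)
    (hlip : ∀ x ∈ X, ∀ x₁ ∈ Metric.closedBall x (r ‖g x‖),
      ∀ x₂ ∈ Metric.closedBall x (r ‖g x‖),
        ‖g x₁ - g x₂‖ ≤ ℓ ‖g x‖ * ‖x₁ - x₂‖)
    (fstar : ℝ) (hfstar : ∀ x ∈ X, fstar ≤ f x)
    (x : ℕ → EuclideanSpace ℝ (Fin d)) (hx0 : x 0 ∈ X)
    (G : ℝ)
    (hG : G ≥ max (Real.sqrt (32 * ℓ G * (f (x 0) - fstar))) (2 * ‖g (x 0)‖))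
    (η : ℝ) (hη0 : 0 < η) (hη : η ≤ min (r G / G) (1 / (4 * ℓ G)))
    (hupdate : ∀ t : ℕ, x (t + 1) = x t - η • g (x t)) :
    (∀ t : ℕ, x t ∈ X ∧ ‖g (x t)‖ ≤ G) ∧
    ∀ T : ℕ, 1 ≤ T →
      (1 / (T : ℝ)) * ∑ t ∈ Finset.range T, ‖g (x t)‖ ^ 2 ≤
        2 * (f (x 0) - fstar) / (η * T) := by
  have hf : IsRLSmoothOn X f g r ℓ := ⟨hgrad, hball, hlip⟩
  obtain ⟨hGsqrt, hGgrad⟩ := max_le_iff.1 hG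
  have hG0 : 0 ≤ G := (by positivity : 0 ≤ 2 * ‖g (x 0)‖).trans hGgrad
  have hℓG : 0 < ℓ G := hℓpos G hG0
  have hηr : η ≤ r G / G := hη.trans (min_le_left _ _)
  have hηℓ : η * ℓ G ≤ 1 / 4 := by
    have := (le_div_iff₀ (by positivity)).1 (hη.trans (min_le_right _ _))
    linarith
  have hx0G : ‖g (x 0)‖ ^ 2 + 8 * ℓ G * (f (x 0) - fstar) ≤ G ^ 2 := by
    have hΔ : 32 * ℓ G * (f (x 0) - fstar) ≤ G ^ 2 :=
      (Real.sqrt_le_left hG0).1 hGsqrt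
    nlinarith [pow_le_pow_left₀ (by positivity) hGgrad 2]
  have hbound := hf.gradientDescent_mem_and_norm_le hℓmono hℓpos hranti hrpos hfstar hx0 hupdate
    hG0 hη0.le hηr hηℓ hx0G
  refine ⟨hbound, fun T hT => ?_⟩
  have hdesc (t : ℕ) : f (x (t + 1)) ≤ f (x t) - 3 / 4 * η * ‖g (x t)‖ ^ 2 := by
    rw [hupdate t]
    exact (hf.gradient_step_of_norm_le hℓmono hℓpos hranti hrpos (hbound t).1 (hbound t).2
      hη0.le hηr hηℓ).2.2
  have hsum :=
    mul_sum_range_le_sub_of_le_sub (F := fun t => f (x t)) (a := fun t => ‖g (x t)‖ ^ 2) hdesc T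
  have hηS : η * ∑ t ∈ Finset.range T, ‖g (x t)‖ ^ 2 ≤ 2 * (f (x 0) - fstar) := by
    linarith [hfstar _ hx0, hfstar _ (hbound T).1]
  have hT0 : (0 : ℝ) < T := by exact_mod_cast hT
  rw [one_div_mul_eq_div, div_le_div_iff₀ hT0 (by positivity)]
  nlinarith [mul_le_mul_of_nonneg_right hηS hT0.le]

theorem gd_nonconvex_convergence (d : ℕ)
    (X : Set (EuclideanSpace ℝ (Fin d))) (hX : IsOpen X)
    (f : EuclideanSpace ℝ (Fin d) → ℝ)
    (g : EuclideanSpace ℝ (Fin d) → EuclideanSpace ℝ (Fin d))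
    (hgrad : ∀ x ∈ X, HasGradientAt f (g x) x)
    (ℓ r : ℝ → ℝ) (hℓmono : Monotone ℓ) (hℓpos : ∀ u : ℝ, 0 ≤ u → 0 < ℓ u)
    (hranti : Antitone r) (hrpos : ∀ u : ℝ, 0 ≤ u → 0 < r u)
    (hball : ∀ x ∈ X, Metric.closedBall x (r ‖g x‖) ⊆ X)
    (hlip : ∀ x ∈ X, ∀ x₁ ∈ Metric.closedBall x (r ‖g x‖),
      ∀ x₂ ∈ Metric.closedBall x (r ‖g x‖),
        ‖g x₁ - g x₂‖ ≤ ℓ ‖g x‖ * ‖x₁ - x₂‖)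
    (hsubquad : Tendsto (fun u : ℝ => ℓ u / u ^ 2) atTop (nhds 0))
    (fstar : ℝ) (hfstar : ∀ x ∈ X, fstar ≤ f x)
    (x : ℕ → EuclideanSpace ℝ (Fin d)) (hx0 : x 0 ∈ X)
    (G : ℝ)
    (hG : G ≥ max (Real.sqrt (32 * ℓ G * (f (x 0) - fstar))) (2 * ‖g (x 0)‖))
    (η : ℝ) (hη0 : 0 < η) (hη : η ≤ min (r G / G) (1 / (4 * ℓ G)))
    (hupdate : ∀ t : ℕ, x (t + 1) = x t - η • g (x t)) :
    (∀ t : ℕ, x t ∈ X ∧ ‖g (x t)‖ ≤ G) ∧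
    ∀ T : ℕ, 1 ≤ T →
      (1 / (T : ℝ)) * ∑ t ∈ Finset.range T, ‖g (x t)‖ ^ 2 ≤
        2 * (f (x 0) - fstar) / (η * T) :=
  gd_nonconvex_convergence_general d X f g hgrad ℓ r hℓmono hℓpos hranti hrpos hball hlip fstar
    hfstar x hx0 G hG η hη0 hη hupdate
end

section
/- Define A_0 = 1/η (η > 0), B_0 = 0, B_{t+1} = B_t + (1+√(4B_t+1))/2, A_t = B_t + 1/η. Then for all t ≥ 1, (1 − A_t/A_{t+1})·(1/A_t)·∑_{s=0}^{t−1} √(A_{s+1})·(A_{s+1} − A_s − 1) ≤ 4. -/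
/-!
The recursion is chosen so that `√B_{t+1} = (1 + √(4 B_t + 1)) / 2`, i.e.
`B_{t+1} - B_t = √B_{t+1}` and `√B_t ≥ t / 2`. Hence every summand is at most
`√A_{s+1} · √B_{s+1} ≤ A_{s+1} ≤ A_t`, the sum is at most `t A_t`, and the prefactor is
`√B_{t+1} / (A_{t+1} A_t)`. The left-hand side is therefore at most
`t √B_{t+1} / A_{t+1} ≤ 2 B_{t+1} / A_{t+1} ≤ 2`.
-/

open Finset Real

theorem sqrt_add_half_one_add_sqrt {b : ℝ} (hb : 0 ≤ b) :
    √(b + (1 + √(4 * b + 1)) / 2) = (1 + √(4 * b + 1)) / 2 := by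
  have hsq : √(4 * b + 1) ^ 2 = 4 * b + 1 := sq_sqrt (by linarith)
  rw [sqrt_eq_iff_eq_sq (by positivity) (by positivity)]
  linear_combination -hsq / 4

namespace NagWeights

variable {B : ℕ → ℝ} (hB0 : 0 ≤ B 0)
  (hBrec : ∀ t : ℕ, B (t + 1) = B t + (1 + √(4 * B t + 1)) / 2)
include hB0 hBrec

theorem nonneg (t : ℕ) : 0 ≤ B t := by
  induction t with
  | zero => exact hB0
  | succ n ih => rw [hBrec]; positivity

theorem sqrt_succ (t : ℕ) : √(B (t + 1)) = (1 + √(4 * B t + 1)) / 2 := by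
  rw [hBrec, sqrt_add_half_one_add_sqrt (nonneg hB0 hBrec t)]

theorem succ_eq_add_sqrt (t : ℕ) : B (t + 1) = B t + √(B (t + 1)) := by
  rw [sqrt_succ hB0 hBrec, hBrec]

theorem monotone : Monotone B :=
  monotone_nat_of_le_succ fun n => by
    linarith [succ_eq_add_sqrt hB0 hBrec n, sqrt_nonneg (B (n + 1))]

theorem half_le_sqrt (t : ℕ) : (t : ℝ) / 2 ≤ √(B t) := by
  induction t with
  | zero => simp
  | succ n ih =>
    have h4 : 2 * √(B n) ≤ √(4 * B n + 1) := by
      rw [show 2 * √(B n) = √(4 * B n) by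
        rw [sqrt_mul' _ (nonneg hB0 hBrec n), show (4 : ℝ) = 2 ^ 2 by norm_num,
          sqrt_sq zero_le_two]]
      exact sqrt_le_sqrt (by linarith)
    rw [sqrt_succ hB0 hBrec]
    push_cast
    linarith

variable {A : ℕ → ℝ} {c : ℝ} (hA : ∀ t : ℕ, A t = B t + c)
include hA

theorem weight_term_le (hc : 0 ≤ c) (s : ℕ) :
    √(A (s + 1)) * (A (s + 1) - A s - 1) ≤ A (s + 1) := by
  have hgap : A (s + 1) - A s - 1 ≤ √(A (s + 1)) := by
    simp only [hA]
    linarith [succ_eq_add_sqrt hB0 hBrec s,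
      sqrt_le_sqrt (show B (s + 1) ≤ B (s + 1) + c by linarith)]
  calc √(A (s + 1)) * (A (s + 1) - A s - 1) ≤ √(A (s + 1)) * √(A (s + 1)) :=
        mul_le_mul_of_nonneg_left hgap (sqrt_nonneg _)
    _ = A (s + 1) := mul_self_sqrt (by rw [hA]; linarith [nonneg hB0 hBrec (s + 1)])

theorem sum_weight_le (hc : 0 ≤ c) (t : ℕ) :
    ∑ s ∈ range t, √(A (s + 1)) * (A (s + 1) - A s - 1) ≤ t * A t := by
  calc ∑ s ∈ range t, √(A (s + 1)) * (A (s + 1) - A s - 1)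
      ≤ ∑ _s ∈ range t, A t := by
        refine sum_le_sum fun s hs => (weight_term_le hB0 hBrec hA hc s).trans ?_
        rw [hA, hA]
        linarith [monotone hB0 hBrec (mem_range.mp hs : s + 1 ≤ t)]
    _ = t * A t := by rw [sum_const, card_range, nsmul_eq_mul]

theorem pos (hc : 0 < c) (t : ℕ) : 0 < A t := by
  rw [hA]; linarith [nonneg hB0 hBrec t]

theorem one_sub_div_succ (hc : 0 < c) (t : ℕ) :
    1 - A t / A (t + 1) = √(B (t + 1)) / A (t + 1) := by
  have := pos hB0 hBrec hA hc (t + 1)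
  field_simp
  rw [hA, hA]
  linarith [succ_eq_add_sqrt hB0 hBrec t]

end NagWeights

theorem nag_weight_coefficient_sum (η : ℝ) (hη : 0 < η)
    (B A : ℕ → ℝ) (hB0 : B 0 = 0)
    (hBrec : ∀ t : ℕ, B (t + 1) = B t + (1 + Real.sqrt (4 * B t + 1)) / 2)
    (hA : ∀ t : ℕ, A t = B t + 1 / η) :
    ∀ t : ℕ, 1 ≤ t →
      (1 - A t / A (t + 1)) * (1 / A t) *
        ∑ s ∈ Finset.range t, Real.sqrt (A (s + 1)) * (A (s + 1) - A s - 1) ≤ 4 := by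
  intro t _
  have hc : 0 < 1 / η := by positivity
  have hB0' : 0 ≤ B 0 := hB0.ge
  have hAt := NagWeights.pos hB0' hBrec hA hc t
  have hAt1 := NagWeights.pos hB0' hBrec hA hc (t + 1)
  have hBt1 := NagWeights.nonneg hB0' hBrec (t + 1)
  have hhalf : (t : ℝ) ≤ 2 * √(B (t + 1)) := by
    have := NagWeights.half_le_sqrt hB0' hBrec (t + 1)
    push_cast at this
    linarith
  rw [NagWeights.one_sub_div_succ hB0' hBrec hA hc]
  calc √(B (t + 1)) / A (t + 1) * (1 / A t) *
        ∑ s ∈ range t, √(A (s + 1)) * (A (s + 1) - A s - 1)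
      ≤ √(B (t + 1)) / A (t + 1) * (1 / A t) * (t * A t) := by
        gcongr
        exact NagWeights.sum_weight_le hB0' hBrec hA hc.le t
    _ = t * √(B (t + 1)) / A (t + 1) := by field_simp
    _ ≤ 2 * B (t + 1) / A (t + 1) := by
        refine div_le_div_of_nonneg_right ?_ hAt1.le
        nlinarith [mul_self_sqrt hBt1, sqrt_nonneg (B (t + 1))]
    _ ≤ 2 := by
        rw [div_le_iff₀ hAt1, hA]
        linarith
    _ ≤ 4 := by norm_num
end

section
/- Let 0 < ημ < 1 and define B_0 = 0, B_{t+1} = (2B_t + 1 + √(4B_t + 4ημB_t² + 1))/(2(1−ημ)), A_t = B_t + 1/(ημ). Then for all t ≥ 1, ∑_{s=0}^{t−1} √(A_{s+1})/A_t ≤ 3 + 4·log(e + 1/(ημ)). -/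
/-!
Write `p = ημ`. The recursion gives `B (s + 1) ≥ B s + √(B s)`, so `∑ √(B (s + 1))` telescopes
to at most `B t + √(B t) ≤ 2 B t`, and `B (s + 1) ≥ (1 + √p) B s` with `B 1 ≥ 1`, so `B` grows
geometrically. Since `√(A s) ≤ √(B s) + 1 / √p`, what remains is the term `t / √p`; it is at most
`2 log (e + 1 / p) ((1 + √p) ^ t + 1 / p) ≤ 4 log (e + 1 / p) A t` by the elementary
`x ≤ log (e + 1 / p) (p exp x + 1)` at `x = t √p / 2`, together with `exp (√p / 2) ≤ 1 + √p`.
-/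

open Finset Real

lemma one_le_log_exp_one_add {y : ℝ} (hy : 0 ≤ y) : 1 ≤ log (exp 1 + y) := by
  rw [le_log_iff_exp_le (by positivity)]
  linarith

/-- Since `log (c * exp x) ≤ c * exp x` and `log (1 / c) ≤ log (exp 1 + 1 / c)`, the latter
being at least `1`. -/
lemma le_log_exp_one_add_inv_mul {c : ℝ} (hc : 0 < c) (x : ℝ) :
    x ≤ log (exp 1 + 1 / c) * (c * exp x + 1) := by
  set L := log (exp 1 + 1 / c)
  have hL : 1 ≤ L := one_le_log_exp_one_add (by positivity)
  have hlog_inv : log (1 / c) ≤ L := log_le_log (by positivity) (by linarith [exp_pos 1])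
  have hu : 0 < c * exp x := by positivity
  have hx : x = log (c * exp x) + log (1 / c) := by
    rw [log_mul hc.ne' (exp_pos x).ne', log_exp, one_div, log_inv]; ring
  have hlog_u : log (c * exp x) ≤ L * (c * exp x) := by
    nlinarith [log_le_sub_one_of_pos hu]
  nlinarith

lemma exp_half_le_one_add {q : ℝ} (hq0 : 0 ≤ q) (hq1 : q ≤ 1) : exp (q / 2) ≤ 1 + q := by
  rw [← le_log_iff_exp_le (by linarith)]
  calc q / 2 ≤ q / (1 + q) := div_le_div_of_nonneg_left hq0 (by linarith) (by linarith)
    _ = 1 - (1 + q)⁻¹ := by field_simp; ring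
    _ ≤ log (1 + q) := one_sub_inv_le_log_of_pos (by linarith)

lemma nat_div_sqrt_le {p : ℝ} (hp0 : 0 < p) (hp1 : p ≤ 1) (t : ℕ) :
    t / √p ≤ 2 * log (exp 1 + 1 / p) * ((1 + √p) ^ t + 1 / p) := by
  have hq : 0 < √p := sqrt_pos.2 hp0
  have hpow : exp (t * √p / 2) ≤ (1 + √p) ^ t := by
    rw [mul_div_assoc, exp_nat_mul]
    exact pow_le_pow_left₀ (exp_pos _).le (exp_half_le_one_add hq.le (sqrt_le_one.2 hp1)) t
  have hmain := le_log_exp_one_add_inv_mul hp0 (t * √p / 2)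
  have hL : 0 ≤ log (exp 1 + 1 / p) := zero_le_one.trans (one_le_log_exp_one_add (by positivity))
  have : t / √p = 2 * (t * √p / 2) / p := by
    field_simp
    rw [sq_sqrt hp0.le]
  rw [this, div_le_iff₀ hp0]
  calc 2 * (t * √p / 2) ≤ 2 * (log (exp 1 + 1 / p) * (p * exp (t * √p / 2) + 1)) := by linarith
    _ ≤ 2 * (log (exp 1 + 1 / p) * (p * (1 + √p) ^ t + 1)) := by gcongr
    _ = 2 * log (exp 1 + 1 / p) * ((1 + √p) ^ t + 1 / p) * p := by field_simp

lemma Real.sqrt_add_le_sqrt_add_sqrt {a b : ℝ} (ha : 0 ≤ a) (hb : 0 ≤ b) :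
    √(a + b) ≤ √a + √b := by
  rw [sqrt_le_left (by positivity)]
  nlinarith [sq_sqrt ha, sq_sqrt hb, sqrt_nonneg a, sqrt_nonneg b]

noncomputable def nesterovWeightStep (p b : ℝ) : ℝ :=
  (2 * b + 1 + √(4 * b + 4 * p * b ^ 2 + 1)) / (2 * (1 - p))

section Step

variable {p b : ℝ}

lemma le_nesterovWeightStep {x : ℝ} (hp0 : 0 ≤ p) (hp1 : p < 1) (hx : 0 ≤ x)
    (h : 2 * x ≤ 2 * b + 1 + √(4 * b + 4 * p * b ^ 2 + 1)) : x ≤ nesterovWeightStep p b := by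
  rw [nesterovWeightStep, le_div_iff₀ (by linarith)]
  nlinarith

lemma one_le_nesterovWeightStep (hp0 : 0 ≤ p) (hp1 : p < 1) (hb : 0 ≤ b) :
    1 ≤ nesterovWeightStep p b := by
  refine le_nesterovWeightStep hp0 hp1 zero_le_one ?_
  have : 1 ≤ √(4 * b + 4 * p * b ^ 2 + 1) :=
    one_le_sqrt.2 (by nlinarith [mul_nonneg hp0 (sq_nonneg b)])
  linarith

lemma add_sqrt_le_nesterovWeightStep (hp0 : 0 ≤ p) (hp1 : p < 1) (hb : 0 ≤ b) :
    b + √b ≤ nesterovWeightStep p b := by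
  refine le_nesterovWeightStep hp0 hp1 (by positivity) ?_
  have : 2 * √b ≤ √(4 * b + 4 * p * b ^ 2 + 1) := by
    rw [le_sqrt (by positivity) (by nlinarith [mul_nonneg hp0 (sq_nonneg b)]), mul_pow,
      sq_sqrt hb]
    nlinarith [mul_nonneg hp0 (sq_nonneg b)]
  linarith

lemma one_add_sqrt_mul_le_nesterovWeightStep (hp0 : 0 ≤ p) (hp1 : p < 1) (hb : 0 ≤ b) :
    (1 + √p) * b ≤ nesterovWeightStep p b := by
  refine le_nesterovWeightStep hp0 hp1 (by positivity) ?_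
  have : 2 * √p * b ≤ √(4 * b + 4 * p * b ^ 2 + 1) := by
    rw [le_sqrt (by positivity) (by nlinarith [mul_nonneg hp0 (sq_nonneg b)]), mul_pow, mul_pow,
      sq_sqrt hp0]
    nlinarith
  linarith

end Step

lemma sum_range_sqrt_succ_le {B : ℕ → ℝ} (h0 : 0 ≤ B 0) (h : ∀ s, B s + √(B s) ≤ B (s + 1))
    (t : ℕ) : ∑ s ∈ range t, √(B (s + 1)) ≤ B t + √(B t) := by
  induction t with
  | zero => simpa using add_nonneg h0 (sqrt_nonneg _)
  | succ t ih => rw [sum_range_succ]; linarith [h t]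

section Weights

variable {p : ℝ} {B : ℕ → ℝ}

lemma nesterovWeight_nonneg (hp0 : 0 ≤ p) (hp1 : p < 1) (h0 : 0 ≤ B 0)
    (hrec : ∀ s, B (s + 1) = nesterovWeightStep p (B s)) : ∀ s, 0 ≤ B s
  | 0 => h0
  | s + 1 => hrec s ▸ zero_le_one.trans
      (one_le_nesterovWeightStep hp0 hp1 (nesterovWeight_nonneg hp0 hp1 h0 hrec s))

lemma one_add_sqrt_pow_le_two_mul (hp0 : 0 ≤ p) (hp1 : p < 1) (h0 : 0 ≤ B 0)
    (hrec : ∀ s, B (s + 1) = nesterovWeightStep p (B s)) (t : ℕ) :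
    (1 + √p) ^ (t + 1) ≤ 2 * B (t + 1) := by
  have hB := nesterovWeight_nonneg hp0 hp1 h0 hrec
  have hgeom : (1 + √p) ^ t * B 1 ≤ B (t + 1) :=
    geom_le (u := fun k ↦ B (k + 1)) (by positivity) t fun k _ ↦
      (hrec (k + 1)).symm ▸ one_add_sqrt_mul_le_nesterovWeightStep hp0 hp1 (hB _)
  have hB1 : 1 ≤ B 1 := hrec 0 ▸ one_le_nesterovWeightStep hp0 hp1 h0
  have hq : √p ≤ 1 := sqrt_le_one.2 hp1.le
  calc (1 + √p) ^ (t + 1) = (1 + √p) * (1 + √p) ^ t := pow_succ' _ _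
    _ ≤ 2 * ((1 + √p) ^ t * B 1) := by
        gcongr
        · linarith
        · exact le_mul_of_one_le_right (by positivity) hB1
    _ ≤ 2 * B (t + 1) := by gcongr

lemma sum_range_sqrt_succ_le_two_mul (hp0 : 0 ≤ p) (hp1 : p < 1) (h0 : 0 ≤ B 0)
    (hrec : ∀ s, B (s + 1) = nesterovWeightStep p (B s)) (t : ℕ) :
    ∑ s ∈ range (t + 1), √(B (s + 1)) ≤ 2 * B (t + 1) := by
  have hB := nesterovWeight_nonneg hp0 hp1 h0 hrec
  have hsum := sum_range_sqrt_succ_le h0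
    (fun s ↦ hrec s ▸ add_sqrt_le_nesterovWeightStep hp0 hp1 (hB s)) (t + 1)
  have hsqrt : √(B (t + 1)) ≤ B (t + 1) :=
    sqrt_le_self_iff.2 (Or.inr (hrec t ▸ one_le_nesterovWeightStep hp0 hp1 (hB t)))
  linarith

end Weights

theorem nag_sc_weight_coefficient_sum (η μ : ℝ) (hη : 0 < η) (hμ : 0 < μ)
    (hημ : η * μ < 1) (B A : ℕ → ℝ) (hB0 : B 0 = 0)
    (hBrec : ∀ t : ℕ, B (t + 1) =
      (2 * B t + 1 + Real.sqrt (4 * B t + 4 * (η * μ) * B t ^ 2 + 1)) / (2 * (1 - η * μ)))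
    (hA : ∀ t : ℕ, A t = B t + 1 / (η * μ)) :
    ∀ t : ℕ, 1 ≤ t →
      (∑ s ∈ Finset.range t, Real.sqrt (A (s + 1)) / A t) ≤
        3 + 4 * Real.log (Real.exp 1 + 1 / (η * μ)) := by
  intro t ht
  obtain ⟨t, rfl⟩ := Nat.exists_eq_add_of_le' ht
  set p := η * μ
  have hp : 0 < p := mul_pos hη hμ
  have hrec : ∀ s, B (s + 1) = nesterovWeightStep p (B s) := hBrec
  have hB := nesterovWeight_nonneg hp.le hημ hB0.ge hrec
  have hsqrtA : ∀ s, √(A (s + 1)) ≤ √(B (s + 1)) + 1 / √p := fun s ↦ by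
    rw [hA, one_div √p, ← sqrt_inv, ← one_div]
    exact sqrt_add_le_sqrt_add_sqrt (hB _) (by positivity)
  have hcount := nat_div_sqrt_le hp hημ.le (t + 1)
  have hgrowth := one_add_sqrt_pow_le_two_mul hp.le hημ hB0.ge hrec t
  have hsqrtB := sum_range_sqrt_succ_le_two_mul hp.le hημ hB0.ge hrec t
  have hL : 0 ≤ log (exp 1 + 1 / p) := zero_le_one.trans (one_le_log_exp_one_add (by positivity))
  have hA_pos : 0 < A (t + 1) := by rw [hA]; linarith [hB (t + 1), one_div_pos.2 hp]
  rw [← sum_div, div_le_iff₀ hA_pos]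
  calc ∑ s ∈ range (t + 1), √(A (s + 1))
      ≤ ∑ s ∈ range (t + 1), (√(B (s + 1)) + 1 / √p) := sum_le_sum fun s _ ↦ hsqrtA s
    _ = ∑ s ∈ range (t + 1), √(B (s + 1)) + ((t + 1 : ℕ) : ℝ) / √p := by
        rw [sum_add_distrib, sum_const, card_range, nsmul_eq_mul, mul_one_div]
    _ ≤ 2 * B (t + 1) + 2 * log (exp 1 + 1 / p) * (2 * B (t + 1) + 1 / p) := by
        gcongr
        exact hcount.trans (by gcongr)
    _ ≤ (3 + 4 * log (exp 1 + 1 / p)) * A (t + 1) := by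
        rw [hA]; nlinarith [hB (t + 1), one_div_pos.2 hp]
end

section
/- Let 0 < ημ < 1 and define A_t = B_t + 1/(ημ) with B_0 = 0 and (B_{s+1} − B_s)² = B_{s+1}(1 + ημ B_{s+1}), B_{s+1} ≥ B_s. Then for all 0 ≤ s ≤ t: [(B_{t+1}−B_t)/B_{t+1}]·[(B_{s+1}−B_s)/(1+ημB_{s+1})] ≤ 1. -/
/-!
Writing `a, b, c, d` for `B s, B (s+1), B t, B (t+1)`, the recursion gives
`((d - c)(b - a))² = d(1 + ημd) · b(1 + ημb) ≤ (d(1 + ημb))²`, the last step being `b ≤ d`.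
Taking square roots, `(d - c)(b - a) ≤ d(1 + ημb)`, which is the claim after clearing denominators.
-/

namespace NagCoefficient

variable {κ a b c d : ℝ}

theorem mul_sub_le_of_sq_sub_eq (hκ : 0 ≤ κ) (ha : 0 ≤ a) (hab : a ≤ b) (hbd : b ≤ d)
    (hb : (b - a) ^ 2 = b * (1 + κ * b)) (hd : (d - c) ^ 2 = d * (1 + κ * d)) :
    (d - c) * (b - a) ≤ d * (1 + κ * b) := by
  have hb0 : 0 ≤ b := ha.trans hab
  have hd0 : 0 ≤ d := hb0.trans hbd
  have hsq : ((d - c) * (b - a)) ^ 2 ≤ (d * (1 + κ * b)) ^ 2 := by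
    have hcross : b * (1 + κ * d) ≤ d * (1 + κ * b) := by linarith
    calc ((d - c) * (b - a)) ^ 2 = d * (1 + κ * b) * (b * (1 + κ * d)) := by
          rw [mul_pow, hb, hd]; ring
      _ ≤ d * (1 + κ * b) * (d * (1 + κ * b)) := by gcongr
      _ = (d * (1 + κ * b)) ^ 2 := by ring
  exact le_of_pow_le_pow_left₀ two_ne_zero (by positivity) hsq

theorem div_mul_div_le_one (hκ : 0 ≤ κ) (ha : 0 ≤ a) (hab : a ≤ b) (hbd : b ≤ d)
    (hb : (b - a) ^ 2 = b * (1 + κ * b)) (hd : (d - c) ^ 2 = d * (1 + κ * d)) :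
    (d - c) / d * ((b - a) / (1 + κ * b)) ≤ 1 := by
  rcases (ha.trans hab).eq_or_lt with hb0 | hb0
  · have hba : b - a = 0 := pow_eq_zero_iff two_ne_zero |>.mp (by rw [hb, ← hb0, zero_mul])
    simp [hba]
  · have hden : 0 < d * (1 + κ * b) := by positivity [hb0.trans_le hbd]
    rw [div_mul_div_comm, div_le_one hden]
    exact mul_sub_le_of_sq_sub_eq hκ ha hab hbd hb hd

end NagCoefficient

theorem nag_sc_coef_product_le_one_general (η μ : ℝ) (hη : 0 < η) (hμ : 0 < μ)
    (B : ℕ → ℝ) (hB0 : B 0 = 0)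
    (hmono : ∀ s : ℕ, B s ≤ B (s + 1))
    (hrec : ∀ s : ℕ, (B (s + 1) - B s) ^ 2 = B (s + 1) * (1 + η * μ * B (s + 1))) :
    ∀ s t : ℕ, s ≤ t →
      (B (t + 1) - B t) / B (t + 1) * ((B (s + 1) - B s) / (1 + η * μ * B (s + 1))) ≤ 1 := by
  intro s t hst
  have hB : Monotone B := monotone_nat_of_le_succ hmono
  exact NagCoefficient.div_mul_div_le_one (mul_pos hη hμ).le (hB0 ▸ hB (Nat.zero_le s))
    (hmono s) (hB (Nat.succ_le_succ hst)) (hrec s) (hrec t)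

theorem nag_sc_coef_product_le_one (η μ : ℝ) (hη : 0 < η) (hμ : 0 < μ) (hημ : η * μ < 1)
    (B : ℕ → ℝ) (hB0 : B 0 = 0)
    (hmono : ∀ s : ℕ, B s ≤ B (s + 1))
    (hrec : ∀ s : ℕ, (B (s + 1) - B s) ^ 2 = B (s + 1) * (1 + η * μ * B (s + 1))) :
    ∀ s t : ℕ, s ≤ t →
      (B (t + 1) - B t) / B (t + 1) * ((B (s + 1) - B s) / (1 + η * μ * B (s + 1))) ≤ 1 :=
  nag_sc_coef_product_le_one_general η μ hη hμ B hB0 hmono hrec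
end
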